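/- arXiv:2511.20077 — 11 statements merged into one kernel-verified Lean document; each statement's English description precedes it below -/
import Mathlib

section
/- The non-domination frontier is dense in eligible matches: if (e1,b1) and (e2,b2) are frontier points with e1 < e2, then for every integer e with e1 ≤ e ≤ e2 there exists a frontier point (e,b) for some b. -/
structure Inst (P C : Type) where
  E : C → Finset P
  B : C → Finset P
  hBE : ∀ c, B c ⊆ E c

variable {P C : Type} [DecidableEq P] [Fintype P] [Fintype C]

def IsMatching (I : Inst P C) (μ : C → Option P) : Prop :=
  (∀ c c' p, μ c = some p → μ c' = some p → c = c') ∧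
  ∀ c p, μ c = some p → p ∈ I.E c

def eCount (μ : C → Option P) : ℕ :=
  (Finset.univ.filter fun c => (μ c).isSome).card

def bCount (I : Inst P C) (μ : C → Option P) : ℕ :=
  (Finset.univ.filter fun c => ∃ p ∈ I.B c, μ c = some p).card

def Dominates (I : Inst P C) (μ' μ : C → Option P) : Prop :=
  eCount μ ≤ eCount μ' ∧ bCount I μ ≤ bCount I μ' ∧
    (eCount μ < eCount μ' ∨ bCount I μ < bCount I μ')

def NonDominated (I : Inst P C) (μ : C → Option P) : Prop :=
  IsMatching I μ ∧ ∀ ν, IsMatching I ν → ¬ Dominates I ν μ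

def OnFrontier (I : Inst P C) (e b : ℕ) : Prop :=
  ∃ μ, NonDominated I μ ∧ eCount μ = e ∧ bCount I μ = b

/- ------------------------------------------------------------------ -/
/- Auxiliary development for the proof of `frontier_dense`.           -/
/- ------------------------------------------------------------------ -/

namespace FrontierAux

/-- The unique `μ`-preimage of `p`, if any (unique when `μ` is injective). -/
noncomputable def preimg (μ : C → Option P) (p : P) : Option C :=
  if h : ∃ c, μ c = some p then some h.choose else none

lemma preimg_spec {μ : C → Option P} {p : P} {c : C} (h : preimg μ p = some c) :
    μ c = some p := by
  unfold preimg at h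
  split_ifs at h with h'
  obtain rfl : h'.choose = c := Option.some_injective _ h
  exact h'.choose_spec

lemma preimg_eq_some {μ : C → Option P}
    (hinj : ∀ c c' q, μ c = some q → μ c' = some q → c = c')
    {p : P} {c : C} (h : μ c = some p) : preimg μ p = some c := by
  have hex : ∃ c, μ c = some p := ⟨c, h⟩
  unfold preimg
  rw [dif_pos hex]
  exact congrArg some (hinj _ _ _ hex.choose_spec h)

lemma preimg_none {μ : C → Option P} {p : P} (h : preimg μ p = none) :
    ∀ c, μ c ≠ some p := by
  intro c hc
  unfold preimg at h
  split_ifs at h with h'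
  exact h' ⟨c, hc⟩

/-- One step along the alternating path: follow `ν`, then the `μ`-preimage. -/
noncomputable def Fstep (μ ν : C → Option P) (c : C) : Option C :=
  (ν c).bind (preimg μ)

lemma Fstep_spec {μ ν : C → Option P} {c c' : C} (h : Fstep μ ν c = some c') :
    ∃ p, ν c = some p ∧ μ c' = some p := by
  unfold Fstep at h
  cases hν : ν c with
  | none => rw [hν] at h; simp at h
  | some p =>
    rw [hν] at h
    exact ⟨p, rfl, preimg_spec h⟩

lemma Fstep_none {μ ν : C → Option P} {c : C} (h : Fstep μ ν c = none) :
    ν c = none ∨ ∃ p, ν c = some p ∧ ∀ c', μ c' ≠ some p := by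
  unfold Fstep at h
  cases hν : ν c with
  | none => exact Or.inl rfl
  | some p =>
    rw [hν] at h
    exact Or.inr ⟨p, rfl, preimg_none h⟩

lemma Fstep_eq_some {μ ν : C → Option P}
    (hinj : ∀ c c' q, μ c = some q → μ c' = some q → c = c')
    {c c' : C} {p : P} (hν : ν c = some p) (hμ : μ c' = some p) :
    Fstep μ ν c = some c' := by
  unfold Fstep
  rw [hν]
  exact preimg_eq_some hinj hμ

/-- The orbit of the step function, starting at `c0`. -/
noncomputable def seqq (μ ν : C → Option P) (c0 : C) (n : ℕ) : Option C :=
  (fun o => Option.bind o (Fstep μ ν))^[n] (some c0)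

lemma seqq_zero (μ ν : C → Option P) (c0 : C) : seqq μ ν c0 0 = some c0 := rfl

lemma seqq_succ (μ ν : C → Option P) (c0 : C) (n : ℕ) :
    seqq μ ν c0 (n + 1) = (seqq μ ν c0 n).bind (Fstep μ ν) :=
  Function.iterate_succ_apply' _ _ _

lemma seqq_none_mono {μ ν : C → Option P} {c0 : C} {m n : ℕ}
    (h : seqq μ ν c0 m = none) (hmn : m ≤ n) : seqq μ ν c0 n = none := by
  induction hmn with
  | refl => exact h
  | step _ ih =>
    rename_i n' _
    rw [seqq_succ, ih]
    rfl

lemma seqq_isSome_mono {μ ν : C → Option P} {c0 : C} {m n : ℕ}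
    (h : (seqq μ ν c0 n).isSome) (hmn : m ≤ n) : (seqq μ ν c0 m).isSome := by
  by_contra hc
  rw [Option.not_isSome_iff_eq_none] at hc
  rw [seqq_none_mono hc hmn] at h
  simp at h

lemma bind_inj {μ ν : C → Option P}
    (hνinj : ∀ c c' q, ν c = some q → ν c' = some q → c = c')
    {o o' : Option C} {a : C}
    (h : o.bind (Fstep μ ν) = some a) (h' : o'.bind (Fstep μ ν) = some a) : o = o' := by
  rcases Option.bind_eq_some_iff.mp h with ⟨c, rfl, hc⟩
  rcases Option.bind_eq_some_iff.mp h' with ⟨c', rfl, hc'⟩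
  obtain ⟨p, hp1, hp2⟩ := Fstep_spec hc
  obtain ⟨p', hp1', hp2'⟩ := Fstep_spec hc'
  rw [hp2'] at hp2
  obtain rfl : p' = p := Option.some_injective _ hp2
  exact congrArg some (hνinj _ _ _ hp1 hp1')

lemma iter_peel {μ ν : C → Option P}
    (hνinj : ∀ c c' q, ν c = some q → ν c' = some q → c = c') :
    ∀ (m : ℕ) {o o' : Option C},
      (fun o => Option.bind o (Fstep μ ν))^[m] o = (fun o => Option.bind o (Fstep μ ν))^[m] o' →
      ((fun o => Option.bind o (Fstep μ ν))^[m] o).isSome → o = o' := by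
  intro m
  induction m with
  | zero => intro o o' h _; exact h
  | succ m ih =>
    intro o o' h hs
    rw [Function.iterate_succ_apply'] at h hs
    rw [Function.iterate_succ_apply'] at h
    obtain ⟨a, ha⟩ := Option.isSome_iff_exists.mp hs
    have h2 := bind_inj hνinj ha (h ▸ ha)
    refine ih h2 ?_
    by_contra hc
    rw [Option.not_isSome_iff_eq_none] at hc
    rw [hc] at ha
    simp at ha

lemma not_step_to_start {μ ν : C → Option P} {c0 : C} (h0 : μ c0 = none)
    (o : Option C) : o.bind (Fstep μ ν) ≠ some c0 := by
  intro h
  rcases Option.bind_eq_some_iff.mp h with ⟨c, _, hc⟩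
  obtain ⟨p, _, hp⟩ := Fstep_spec hc
  rw [h0] at hp
  simp at hp

/-- Orbits from distinct (μ-unmatched) starts are disjoint, and each orbit is injective. -/
lemma orbit_eq {μ ν : C → Option P}
    (hνinj : ∀ c c' q, ν c = some q → ν c' = some q → c = c')
    {c0 c0' : C} (h0 : μ c0 = none) (h0' : μ c0' = none)
    {m n : ℕ} (h : seqq μ ν c0 m = seqq μ ν c0' n) (hs : (seqq μ ν c0 m).isSome) :
    c0 = c0' ∧ m = n := by
  have key : ∀ (a a' : C) (i j : ℕ), μ a = none → μ a' = none → i ≤ j →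
      seqq μ ν a i = seqq μ ν a' j → (seqq μ ν a i).isSome → a = a' ∧ i = j := by
    intro a a' i j ha ha' hij heq hsome
    obtain ⟨d, rfl⟩ := Nat.exists_eq_add_of_le hij
    have hrw : seqq μ ν a' (i + d) =
        (fun o => Option.bind o (Fstep μ ν))^[i] (seqq μ ν a' d) := by
      unfold seqq
      rw [Function.iterate_add_apply]
    rw [hrw] at heq
    have := iter_peel hνinj i heq hsome
    cases d with
    | zero => exact ⟨Option.some_injective _ this, rfl⟩
    | succ d' =>
      exfalso
      rw [seqq_succ] at this
      exact not_step_to_start ha _ this.symm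
  rcases Nat.le_total m n with hmn | hnm
  · exact key c0 c0' m n h0 h0' hmn h hs
  · obtain ⟨he, hn⟩ := key c0' c0 n m h0' h0 hnm h.symm (h ▸ hs)
    exact ⟨he.symm, hn.symm⟩

lemma exists_seqq_none {μ ν : C → Option P}
    (hνinj : ∀ c c' q, ν c = some q → ν c' = some q → c = c')
    {c0 : C} (h0 : μ c0 = none) : ∃ n, seqq μ ν c0 n = none := by
  by_contra h
  push_neg at h
  have hsome : ∀ n, (seqq μ ν c0 n).isSome := fun n =>
    Option.ne_none_iff_isSome.mp (h n)
  obtain ⟨m, n, hmn, he⟩ := Finite.exists_ne_map_eq_of_infinite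
    (fun n => (seqq μ ν c0 n).get (hsome n))
  have heq : seqq μ ν c0 m = seqq μ ν c0 n := by
    rw [← Option.some_get (hsome m), ← Option.some_get (hsome n)]
    exact congrArg some he
  exact hmn (orbit_eq hνinj h0 h0 heq (hsome m)).2

/-- Every (μ-unmatched) start has a terminal element of its orbit. -/
lemma exists_terminal {μ ν : C → Option P}
    (hνinj : ∀ c c' q, ν c = some q → ν c' = some q → c = c')
    {c0 : C} (h0 : μ c0 = none) :
    ∃ n c, seqq μ ν c0 n = some c ∧ Fstep μ ν c = none := by
  classical
  have hex := exists_seqq_none (μ := μ) hνinj h0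
  have hKnone : seqq μ ν c0 (Nat.find hex) = none := Nat.find_spec hex
  have hKpos : Nat.find hex ≠ 0 := by
    intro h
    rw [h, seqq_zero] at hKnone
    simp at hKnone
  obtain ⟨m, hm⟩ : ∃ m, Nat.find hex = m + 1 := ⟨Nat.find hex - 1, by omega⟩
  have hmne : seqq μ ν c0 m ≠ none := Nat.find_min hex (by omega)
  obtain ⟨c, hc⟩ := Option.ne_none_iff_exists'.mp hmne
  refine ⟨m, c, hc, ?_⟩
  rw [hm, seqq_succ, hc] at hKnone
  exact hKnone

/-- Every orbit element except the start is μ-matched, via a ν-edge from the orbit. -/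
lemma orb_pred {μ ν : C → Option P} {c0 c : C} {n : ℕ}
    (hn : seqq μ ν c0 n = some c) (hne : c ≠ c0) :
    ∃ c' p m, seqq μ ν c0 m = some c' ∧ ν c' = some p ∧ μ c = some p := by
  cases n with
  | zero =>
    rw [seqq_zero] at hn
    exact absurd (Option.some_injective _ hn).symm hne
  | succ m =>
    rw [seqq_succ] at hn
    rcases Option.bind_eq_some_iff.mp hn with ⟨c', hc', hF⟩
    obtain ⟨p, hp1, hp2⟩ := Fstep_spec hF
    exact ⟨c', p, m, hc', hp1, hp2⟩

/-- Orbit is closed under taking the μ-preimage of a ν-value. -/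
lemma orb_closed {μ ν : C → Option P}
    (hμinj : ∀ c c' q, μ c = some q → μ c' = some q → c = c')
    {c0 c c'' : C} {n : ℕ} {p : P}
    (hn : seqq μ ν c0 n = some c) (hp : ν c = some p) (hc'' : μ c'' = some p) :
    ∃ m, seqq μ ν c0 m = some c'' := by
  refine ⟨n + 1, ?_⟩
  rw [seqq_succ, hn]
  exact Fstep_eq_some hμinj hp hc''

open Classical in
/-- The swap of μ toward ν on the orbit of `c0`. -/
noncomputable def swapA (μ ν : C → Option P) (c0 : C) : C → Option P :=
  fun c => if ∃ n, seqq μ ν c0 n = some c then ν c else μ c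

open Classical in
noncomputable def swapB (μ ν : C → Option P) (c0 : C) : C → Option P :=
  fun c => if ∃ n, seqq μ ν c0 n = some c then μ c else ν c

lemma card_swap (μ ν : C → Option P) (c0 : C) (p : C → Option P → Prop)
    [∀ c o, Decidable (p c o)] :
    (Finset.univ.filter fun c => p c (swapA μ ν c0 c)).card +
      (Finset.univ.filter fun c => p c (swapB μ ν c0 c)).card =
    (Finset.univ.filter fun c => p c (μ c)).card +
      (Finset.univ.filter fun c => p c (ν c)).card := by
  classical
  simp only [Finset.card_filter]
  rw [← Finset.sum_add_distrib, ← Finset.sum_add_distrib]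
  apply Finset.sum_congr rfl
  intro c _
  by_cases h : ∃ n, seqq μ ν c0 n = some c
  · simp only [swapA, swapB, if_pos h]
    exact Nat.add_comm _ _
  · simp only [swapA, swapB, if_neg h]

end FrontierAux

open FrontierAux in
/-- The exchange lemma: an augmenting-path swap. -/
lemma exchange_lemma (I : Inst P C) {μ ν : C → Option P}
    (hμ : IsMatching I μ) (hν : IsMatching I ν) (hlt : eCount μ < eCount ν) :
    ∃ μ' ν', IsMatching I μ' ∧ IsMatching I ν' ∧ eCount μ' = eCount μ + 1 ∧
      eCount ν' + 1 = eCount ν ∧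
      bCount I μ + bCount I ν ≤ bCount I μ' + bCount I ν' := by
  classical
  obtain ⟨hμinj, hμel⟩ := hμ
  obtain ⟨hνinj, hνel⟩ := hν
  -- counting: more ν-only matched categories than μ-only ones
  set D0 : Finset C := Finset.univ.filter (fun c => μ c = none ∧ (ν c).isSome) with hD0
  set D1 : Finset C := Finset.univ.filter (fun c => (μ c).isSome ∧ ν c = none) with hD1
  set A : Finset C := Finset.univ.filter (fun c => (μ c).isSome ∧ (ν c).isSome) with hA
  have hsplitμ : eCount μ = A.card + D1.card := by
    unfold eCount
    rw [hA, hD1]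
    simp only [Finset.card_filter]
    rw [← Finset.sum_add_distrib]
    apply Finset.sum_congr rfl
    intro c _
    cases h : ν c <;> cases h' : μ c <;> simp [h, h']
  have hsplitν : eCount ν = A.card + D0.card := by
    unfold eCount
    rw [hA, hD0]
    simp only [Finset.card_filter]
    rw [← Finset.sum_add_distrib]
    apply Finset.sum_congr rfl
    intro c _
    cases h : ν c <;> cases h' : μ c <;> simp [h, h']
  have hcard : D1.card < D0.card := by omega
  -- main case split: some start has an augmenting orbit
  by_cases haug : ∃ c0, (μ c0 = none ∧ (ν c0).isSome) ∧
      ∃ n c p, seqq μ ν c0 n = some c ∧ ν c = some p ∧ ∀ c', μ c' ≠ some p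
  · obtain ⟨c0, ⟨h0, hν0⟩, N, cl, pl, hN, hclp, hpl⟩ := haug
    -- the orbit dies right after cl
    have hFcl : Fstep μ ν cl = none := by
      unfold FrontierAux.Fstep
      rw [hclp]
      cases hpre : preimg μ pl with
      | none => rw [Option.bind_some]; exact hpre
      | some c' => exact absurd (preimg_spec hpre) (hpl c')
    have hNone : seqq μ ν c0 (N + 1) = none := by
      rw [seqq_succ, hN, Option.bind_some, hFcl]
    -- indices of orbit elements are ≤ N
    have hidx : ∀ {n : ℕ} {c : C}, seqq μ ν c0 n = some c → n ≤ N := by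
      intro n c hn
      by_contra hc
      have hnone : seqq μ ν c0 n = none := seqq_none_mono hNone (by omega)
      rw [hnone] at hn
      simp at hn
    -- every orbit element is ν-matched
    have horb_nu : ∀ {n : ℕ} {c : C}, seqq μ ν c0 n = some c → (ν c).isSome := by
      intro n c hn
      have hle := hidx hn
      rcases Nat.lt_or_ge n N with hlt' | hge
      · have hs : (seqq μ ν c0 (n + 1)).isSome :=
          seqq_isSome_mono (n := N) (by rw [hN]; rfl) (by omega)
        rw [seqq_succ, hn, Option.bind_some] at hs
        unfold FrontierAux.Fstep at hs
        cases hνc : ν c with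
        | none => rw [hνc] at hs; simp at hs
        | some _ => rfl
      · have : n = N := by omega
        rw [this, hN] at hn
        obtain rfl : cl = c := Option.some_injective _ hn
        rw [hclp]; rfl
    -- the swapped matchings
    set μ' := swapA μ ν c0 with hμ'
    set ν' := swapB μ ν c0 with hν'
    have hμ'def : ∀ c, (∃ n, seqq μ ν c0 n = some c) → μ' c = ν c := by
      intro c h; rw [hμ', swapA, if_pos h]
    have hμ'def' : ∀ c, ¬(∃ n, seqq μ ν c0 n = some c) → μ' c = μ c := by
      intro c h; rw [hμ', swapA, if_neg h]
    have hν'def : ∀ c, (∃ n, seqq μ ν c0 n = some c) → ν' c = μ c := by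
      intro c h; rw [hν', swapB, if_pos h]
    have hν'def' : ∀ c, ¬(∃ n, seqq μ ν c0 n = some c) → ν' c = ν c := by
      intro c h; rw [hν', swapB, if_neg h]
    have horb0 : ∃ n, seqq μ ν c0 n = some c0 := ⟨0, rfl⟩
    -- μ' is a matching
    have hμ'm : IsMatching I μ' := by
      constructor
      · intro c c' p hp hp'
        by_cases hc : ∃ n, seqq μ ν c0 n = some c <;>
          by_cases hc' : ∃ n, seqq μ ν c0 n = some c'
        · rw [hμ'def c hc] at hp
          rw [hμ'def c' hc'] at hp'
          exact hνinj _ _ _ hp hp'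
        · rw [hμ'def c hc] at hp
          rw [hμ'def' c' hc'] at hp'
          obtain ⟨n, hn⟩ := hc
          exact absurd (orb_closed hμinj hn hp hp') hc'
        · rw [hμ'def' c hc] at hp
          rw [hμ'def c' hc'] at hp'
          obtain ⟨n, hn⟩ := hc'
          exact absurd (orb_closed hμinj hn hp' hp) hc
        · rw [hμ'def' c hc] at hp
          rw [hμ'def' c' hc'] at hp'
          exact hμinj _ _ _ hp hp'
      · intro c p hp
        by_cases hc : ∃ n, seqq μ ν c0 n = some c
        · rw [hμ'def c hc] at hp; exact hνel _ _ hp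
        · rw [hμ'def' c hc] at hp; exact hμel _ _ hp
    -- ν' is a matching
    have hν'm : IsMatching I ν' := by
      constructor
      · intro c c' p hp hp'
        by_cases hc : ∃ n, seqq μ ν c0 n = some c <;>
          by_cases hc' : ∃ n, seqq μ ν c0 n = some c'
        · rw [hν'def c hc] at hp
          rw [hν'def c' hc'] at hp'
          exact hμinj _ _ _ hp hp'
        · rw [hν'def c hc] at hp
          rw [hν'def' c' hc'] at hp'
          obtain ⟨n, hn⟩ := hc
          have hne : c ≠ c0 := by
            intro h; rw [h, h0] at hp; simp at hp
          obtain ⟨cp, q, m, hm, hq1, hq2⟩ := orb_pred hn hne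
          rw [hq2] at hp
          obtain rfl : q = p := Option.some_injective _ hp
          exact absurd (⟨m, hm⟩ : ∃ n, seqq μ ν c0 n = some cp)
            (by rw [hνinj _ _ _ hp' hq1] at hc'; exact hc')
        · rw [hν'def' c hc] at hp
          rw [hν'def c' hc'] at hp'
          obtain ⟨n, hn⟩ := hc'
          have hne : c' ≠ c0 := by
            intro h; rw [h, h0] at hp'; simp at hp'
          obtain ⟨cp, q, m, hm, hq1, hq2⟩ := orb_pred hn hne
          rw [hq2] at hp'
          obtain rfl : q = p := Option.some_injective _ hp'
          exact absurd (⟨m, hm⟩ : ∃ n, seqq μ ν c0 n = some cp)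
            (by rw [hνinj _ _ _ hp hq1] at hc; exact hc)
        · rw [hν'def' c hc] at hp
          rw [hν'def' c' hc'] at hp'
          exact hνinj _ _ _ hp hp'
      · intro c p hp
        by_cases hc : ∃ n, seqq μ ν c0 n = some c
        · rw [hν'def c hc] at hp; exact hμel _ _ hp
        · rw [hν'def' c hc] at hp; exact hνel _ _ hp
    -- eCount μ' = eCount μ + 1
    have hiff : ∀ c, (μ' c).isSome ↔ ((μ c).isSome ∨ c = c0) := by
      intro c
      by_cases hc : ∃ n, seqq μ ν c0 n = some c
      · rw [hμ'def c hc]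
        obtain ⟨n, hn⟩ := hc
        constructor
        · intro _
          by_cases hcc : c = c0
          · exact Or.inr hcc
          · obtain ⟨cp, q, m, hm, hq1, hq2⟩ := orb_pred hn hcc
            exact Or.inl (by rw [hq2]; rfl)
        · intro _; exact horb_nu hn
      · rw [hμ'def' c hc]
        constructor
        · exact Or.inl
        · rintro (h | rfl)
          · exact h
          · exact absurd horb0 hc
    have hecount : eCount μ' = eCount μ + 1 := by
      unfold eCount
      have hfilter : (Finset.univ.filter fun c => (μ' c).isSome) =
          insert c0 (Finset.univ.filter fun c => (μ c).isSome) := by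
        ext c
        simp only [Finset.mem_filter, Finset.mem_insert, Finset.mem_univ, true_and]
        rw [hiff c]
        tauto
      rw [hfilter, Finset.card_insert_of_notMem (by simp [h0])]
    -- sums
    have hesum : eCount μ' + eCount ν' = eCount μ + eCount ν := by
      unfold eCount
      exact card_swap μ ν c0 (fun _ o => o.isSome)
    have hbsum : bCount I μ' + bCount I ν' = bCount I μ + bCount I ν := by
      unfold bCount
      exact card_swap μ ν c0 (fun c o => ∃ p ∈ I.B c, o = some p)
    exact ⟨μ', ν', hμ'm, hν'm, hecount, by omega, by omega⟩
  · -- no augmenting start: contradiction with the cardinalities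
    exfalso
    push_neg at haug
    have H : ∀ c0 ∈ D0, ∃ c, c ∈ D1 ∧ ∃ n, seqq μ ν c0 n = some c := by
      intro c0 hc0
      rw [hD0, Finset.mem_filter] at hc0
      obtain ⟨-, h0, hν0⟩ := hc0
      obtain ⟨n, c, hn, hF⟩ := exists_terminal (μ := μ) hνinj h0
      rcases Fstep_none hF with hνc | ⟨p, hp, hnop⟩
      · have hne : c ≠ c0 := by
          intro h
          rw [← h, hνc] at hν0
          simp at hν0
        obtain ⟨cp, q, m, hm, hq1, hq2⟩ := orb_pred hn hne
        refine ⟨c, ?_, n, hn⟩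
        rw [hD1, Finset.mem_filter]
        exact ⟨Finset.mem_univ _, by rw [hq2]; rfl, hνc⟩
      · obtain ⟨c', hc'⟩ := haug c0 ⟨h0, hν0⟩ n c p hn hp
        exact absurd hc' (hnop c')
    set g : C → C := fun c0 => if h : c0 ∈ D0 then (H c0 h).choose else c0 with hg
    have hg1 : ∀ c0 ∈ D0, g c0 ∈ D1 := by
      intro c0 h
      rw [hg]
      simp only [dif_pos h]
      exact (H c0 h).choose_spec.1
    have hg2 : ∀ c0, ∀ h : c0 ∈ D0, ∃ n, seqq μ ν c0 n = some (g c0) := by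
      intro c0 h
      rw [hg]
      simp only [dif_pos h]
      exact (H c0 h).choose_spec.2
    have hinj : Set.InjOn g D0 := by
      intro c0 h c0' h' hgg
      obtain ⟨n, hn⟩ := hg2 c0 h
      obtain ⟨n', hn'⟩ := hg2 c0' h'
      rw [hgg] at hn
      have heq : seqq μ ν c0 n = seqq μ ν c0' n' := by rw [hn, hn']
      have h0 : μ c0 = none := ((Finset.mem_filter.mp h).2).1
      have h0' : μ c0' = none := ((Finset.mem_filter.mp h').2).1
      exact (orbit_eq hνinj h0 h0' heq (by rw [hn]; rfl)).1
    have := Finset.card_le_card_of_injOn g hg1 hinj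
    omega

/-- Truncation: matchings of every smaller size exist. -/
lemma exists_matching_eCount (I : Inst P C) {ν : C → Option P}
    (hν : IsMatching I ν) {e : ℕ} (he : e ≤ eCount ν) :
    ∃ μ, IsMatching I μ ∧ eCount μ = e := by
  classical
  obtain ⟨d, hd⟩ : ∃ d, eCount ν = e + d := ⟨eCount ν - e, by omega⟩
  clear he
  induction d generalizing ν with
  | zero => exact ⟨ν, hν, by omega⟩
  | succ d ih =>
    have hpos : 0 < eCount ν := by omega
    obtain ⟨c, hc⟩ : ∃ c, (ν c).isSome := by
      obtain ⟨c, hc⟩ := Finset.card_pos.mp hpos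
      exact ⟨c, (Finset.mem_filter.mp hc).2⟩
    set ν' : C → Option P := fun c' => if c' = c then none else ν c' with hν'
    have hm : IsMatching I ν' := by
      constructor
      · intro a a' p hp hp'
        simp only [hν'] at hp hp'
        split_ifs at hp hp'
        exact hν.1 _ _ _ hp hp'
      · intro a p hp
        simp only [hν'] at hp
        split_ifs at hp
        exact hν.2 _ _ hp
    have hfilter : (Finset.univ.filter fun c' => (ν' c').isSome) =
        (Finset.univ.filter fun c' => (ν c').isSome).erase c := by
      ext c'
      simp only [Finset.mem_filter, Finset.mem_erase, Finset.mem_univ, true_and, hν']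
      by_cases h : c' = c
      · subst h; simp
      · simp [h]
    have he' : eCount ν' + 1 = eCount ν := by
      unfold eCount
      rw [hfilter, Finset.card_erase_of_mem (by simp [hc])]
      have : 0 < (Finset.univ.filter fun c' => (ν c').isSome).card := hpos
      omega
    exact ih hm (by omega)

/-- Shrinking chain: using a non-dominated μ1, shrink ν to size e gaining bCount. -/
lemma shrink_chain (I : Inst P C) {μ1 : C → Option P} (h1 : NonDominated I μ1)
    {e : ℕ} (he : eCount μ1 ≤ e) :
    ∀ d (ν : C → Option P), IsMatching I ν → eCount ν = e + d →
    ∃ ρ, IsMatching I ρ ∧ eCount ρ = e ∧ bCount I ν + d ≤ bCount I ρ := by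
  intro d
  induction d with
  | zero => exact fun ν hν hcnt => ⟨ν, hν, by omega, by omega⟩
  | succ d ih =>
    intro ν hν hcnt
    have hlt : eCount μ1 < eCount ν := by omega
    obtain ⟨μ', ν', hμ'm, hν'm, hμ'e, hν'e, hb⟩ := exchange_lemma I h1.1 hν hlt
    have hnb : bCount I μ' < bCount I μ1 := by
      by_contra hge
      push_neg at hge
      exact h1.2 μ' hμ'm ⟨by omega, hge, Or.inl (by omega)⟩
    obtain ⟨ρ, hρ, hρe, hρb⟩ := ih ν' hν'm (by omega)
    exact ⟨ρ, hρ, hρe, by omega⟩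

theorem frontier_dense (I : Inst P C) (e1 b1 e2 b2 e : ℕ)
    (h1 : OnFrontier I e1 b1) (h2 : OnFrontier I e2 b2)
    (h12 : e1 < e2) (hle : e1 ≤ e) (hle' : e ≤ e2) :
    ∃ b, OnFrontier I e b := by
  classical
  rcases eq_or_lt_of_le hle with heq | hlt1
  · exact ⟨b1, heq ▸ h1⟩
  · obtain ⟨μ1, h1nd, h1e, h1b⟩ := h1
    obtain ⟨μ2, h2nd, h2e, h2b⟩ := h2
    obtain ⟨ρ0, hρ0m, hρ0e⟩ := exists_matching_eCount I h2nd.1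
      (show e ≤ eCount μ2 by omega)
    set T : Finset ℕ := (Finset.range (Fintype.card C + 1)).filter
      (fun b => ∃ μ, IsMatching I μ ∧ eCount μ = e ∧ bCount I μ = b) with hT
    have hmemT : ∀ {μ : C → Option P}, IsMatching I μ → eCount μ = e →
        bCount I μ ∈ T := by
      intro μ hm hce
      rw [hT, Finset.mem_filter, Finset.mem_range]
      refine ⟨?_, μ, hm, hce, rfl⟩
      have : bCount I μ ≤ Fintype.card C := by
        unfold bCount
        calc (Finset.univ.filter fun c => ∃ p ∈ I.B c, μ c = some p).card
            ≤ Finset.univ.card := Finset.card_filter_le _ _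
          _ = Fintype.card C := Finset.card_univ
      omega
    have hTne : T.Nonempty := ⟨_, hmemT hρ0m hρ0e⟩
    set M := T.max' hTne with hM
    have hmaxmem : M ∈ T := T.max'_mem hTne
    rw [hT, Finset.mem_filter] at hmaxmem
    obtain ⟨-, μ, hμm, hμe, hμb⟩ := hmaxmem
    refine ⟨M, μ, ⟨hμm, ?_⟩, hμe, hμb⟩
    intro ν hνm hdom
    obtain ⟨hde, hdb, hstrict⟩ := hdom
    rw [hμe] at hde
    obtain ⟨d, hd⟩ : ∃ d, eCount ν = e + d := ⟨eCount ν - e, by omega⟩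
    obtain ⟨ρ, hρm, hρe, hρb⟩ := shrink_chain I h1nd
      (show eCount μ1 ≤ e by omega) d ν hνm hd
    have hρT : bCount I ρ ≤ M := T.le_max' _ (hmemT hρm hρe)
    rw [hμb] at hdb
    rw [hμe, hμb] at hstrict
    omega
end

section
/- The non-domination frontier is concave: if (e, b1), (e+1, b2), and (e+2, b3) are three consecutive frontier points, then b1 − b2 ≤ b2 − b3. -/
variable {P C : Type} [DecidableEq P] [Fintype P] [Fintype C]

lemma eCount_eq_sum (μ : C → Option P) :
    eCount μ = ∑ c, if (μ c).isSome then 1 else 0 :=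
  Finset.card_filter _ _

lemma bCount_eq_sum (I : Inst P C) (μ : C → Option P) :
    bCount I μ = ∑ c, if (∃ p ∈ I.B c, μ c = some p) then 1 else 0 :=
  Finset.card_filter _ _

lemma key_exchange (I : Inst P C) (d : ℕ) : ∀ α β : C → Option P,
    IsMatching I α → IsMatching I β →
    (Finset.univ.filter fun c => α c ≠ β c).card ≤ d →
    eCount β = eCount α + 2 →
    ∃ ν ν' : C → Option P, IsMatching I ν ∧ IsMatching I ν' ∧
      eCount ν = eCount α + 1 ∧ eCount ν' = eCount α + 1 ∧
      bCount I α + bCount I β ≤ bCount I ν + bCount I ν' := by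
  induction d with
  | zero =>
    intro α β hα hβ hcard heq
    have hαβ : α = β := by
      funext c
      by_contra h
      have hc : c ∈ Finset.univ.filter fun c => α c ≠ β c := by simp [h]
      have := Finset.card_pos.mpr ⟨c, hc⟩
      omega
    subst hαβ; omega
  | succ n ih =>
    intro α β hα hβ hcard heq
    classical
    -- a start vertex: β-matched, α-unmatched
    have hT : ∃ t, α t = none ∧ (β t).isSome := by
      by_contra h
      push_neg at h
      have hsub : (Finset.univ.filter fun c => (β c).isSome) ⊆
          (Finset.univ.filter fun c => (α c).isSome) := by
        intro c hc
        simp only [Finset.mem_filter, Finset.mem_univ, true_and] at hc ⊢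
        by_contra hac
        have hnone : α c = none := by
          cases h' : α c with
          | none => rfl
          | some p => rw [h'] at hac; simp at hac
        exact absurd hc (by simpa using h c hnone)
      have := Finset.card_le_card hsub
      unfold eCount at heq
      omega
    obtain ⟨t, hαt, hβt⟩ := hT
    set step : C → C → Prop := fun a b => ∃ p, β a = some p ∧ α b = some p with hstep_def
    set S : Finset C := Finset.univ.filter (fun c => Relation.ReflTransGen step t c)
      with hS_def
    have hmemS : ∀ c, c ∈ S ↔ Relation.ReflTransGen step t c := by
      intro c; simp [hS_def]
    have htS : t ∈ S := (hmemS t).mpr Relation.ReflTransGen.refl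
    have hfwd : ∀ c ∈ S, ∀ c', step c c' → c' ∈ S := by
      intro c hc c' h
      exact (hmemS c').mpr (((hmemS c).mp hc).tail h)
    have hpredu : ∀ a b c, step a c → step b c → a = b := by
      rintro a b c ⟨p, hap, hcp⟩ ⟨q, hbq, hcq⟩
      rw [hcp] at hcq
      injection hcq with hpq
      subst hpq
      exact hβ.1 a b p hap hbq
    have hpred : ∀ c ∈ S, c ≠ t → ∃ c', c' ∈ S ∧ step c' c := by
      intro c hc hct
      rcases (Relation.ReflTransGen.cases_tail ((hmemS c).mp hc)) with h | ⟨c', h1, h2⟩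
      · exact absurd h hct
      · exact ⟨c', (hmemS c').mpr h1, h2⟩
    have hback : ∀ c ∈ S, ∀ c', step c' c → c' ∈ S := by
      intro c hc c' h
      by_cases hct : c = t
      · subst hct
        obtain ⟨p, _, hp⟩ := h
        rw [hαt] at hp; exact absurd hp (by simp)
      · obtain ⟨c'', hc''S, hc''⟩ := hpred c hc hct
        rwa [hpredu c' c'' c h hc'']
    set ν : C → Option P := fun c => if c ∈ S then β c else α c with hν_def
    set ν' : C → Option P := fun c => if c ∈ S then α c else β c with hν'_def
    have hνS : ∀ c ∈ S, ν c = β c := by intro c hc; simp [hν_def, hc]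
    have hνc : ∀ c ∉ S, ν c = α c := by intro c hc; simp [hν_def, hc]
    have hν'S : ∀ c ∈ S, ν' c = α c := by intro c hc; simp [hν'_def, hc]
    have hν'c : ∀ c ∉ S, ν' c = β c := by intro c hc; simp [hν'_def, hc]
    -- ν and ν' are matchings
    have hMν : IsMatching I ν := by
      constructor
      · intro c c' p h h'
        by_cases h1 : c ∈ S <;> by_cases h2 : c' ∈ S
        · exact hβ.1 c c' p ((hνS c h1) ▸ h) ((hνS c' h2) ▸ h')
        · exact absurd (hfwd c h1 c' ⟨p, (hνS c h1) ▸ h, (hνc c' h2) ▸ h'⟩) h2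
        · exact absurd (hfwd c' h2 c ⟨p, (hνS c' h2) ▸ h', (hνc c h1) ▸ h⟩) h1
        · exact hα.1 c c' p ((hνc c h1) ▸ h) ((hνc c' h2) ▸ h')
      · intro c p h
        by_cases h1 : c ∈ S
        · exact hβ.2 c p ((hνS c h1) ▸ h)
        · exact hα.2 c p ((hνc c h1) ▸ h)
    have hMν' : IsMatching I ν' := by
      constructor
      · intro c c' p h h'
        by_cases h1 : c ∈ S <;> by_cases h2 : c' ∈ S
        · exact hα.1 c c' p ((hν'S c h1) ▸ h) ((hν'S c' h2) ▸ h')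
        · exact absurd (hback c h1 c' ⟨p, (hν'c c' h2) ▸ h', (hν'S c h1) ▸ h⟩) h2
        · exact absurd (hback c' h2 c ⟨p, (hν'c c h1) ▸ h, (hν'S c' h2) ▸ h'⟩) h1
        · exact hβ.1 c c' p ((hν'c c h1) ▸ h) ((hν'c c' h2) ▸ h')
      · intro c p h
        by_cases h1 : c ∈ S
        · exact hα.2 c p ((hν'S c h1) ▸ h)
        · exact hβ.2 c p ((hν'c c h1) ▸ h)
    -- counting
    have hsplit : ∀ μ : C → Option P,
        eCount μ = (∑ c ∈ S, if (μ c).isSome then 1 else 0)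
          + ∑ c ∈ Finset.univ \ S, if (μ c).isSome then 1 else 0 := by
      intro μ
      rw [eCount_eq_sum, ← Finset.sum_sdiff (Finset.subset_univ S)]
      omega
    have hsum_swap : eCount ν + eCount ν' = eCount α + eCount β := by
      rw [eCount_eq_sum, eCount_eq_sum, eCount_eq_sum, eCount_eq_sum,
        ← Finset.sum_add_distrib, ← Finset.sum_add_distrib]
      apply Finset.sum_congr rfl
      intro c _
      by_cases h1 : c ∈ S
      · rw [hνS c h1, hν'S c h1]; exact Nat.add_comm _ _
      · rw [hνc c h1, hν'c c h1]
    have hbsum_swap : bCount I ν + bCount I ν' = bCount I α + bCount I β := by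
      rw [bCount_eq_sum, bCount_eq_sum, bCount_eq_sum, bCount_eq_sum,
        ← Finset.sum_add_distrib, ← Finset.sum_add_distrib]
      apply Finset.sum_congr rfl
      intro c _
      by_cases h1 : c ∈ S
      · rw [hνS c h1, hν'S c h1]; exact Nat.add_comm _ _
      · rw [hνc c h1, hν'c c h1]
    have hSα : (∑ c ∈ S, if (α c).isSome then 1 else 0) = (S.erase t).card := by
      rw [← Finset.card_filter]
      congr 1
      ext c
      simp only [Finset.mem_filter, Finset.mem_erase]
      constructor
      · rintro ⟨hc, hsome⟩
        refine ⟨?_, hc⟩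
        rintro rfl
        rw [hαt] at hsome; simp at hsome
      · rintro ⟨hct, hc⟩
        obtain ⟨c', _, p, _, hp⟩ := hpred c hc hct
        exact ⟨hc, by simp [hp]⟩
    have hSβ : (∑ c ∈ S, if (β c).isSome then 1 else 0)
        = (S.filter fun c => (β c).isSome).card := (Finset.card_filter _ _).symm
    -- the injection from S.erase t into β-matched elements of S
    have hinj : (S.erase t).card ≤ (S.filter fun c => (β c).isSome).card := by
      set pf : C → C := fun c => if h : ∃ c', step c' c then h.choose else c with hpf_def
      have hpf : ∀ c ∈ S.erase t, step (pf c) c := by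
        intro c hc
        rw [Finset.mem_erase] at hc
        obtain ⟨c', _, hstep'⟩ := hpred c hc.2 hc.1
        have hex : ∃ c', step c' c := ⟨c', hstep'⟩
        simpa [hpf_def, dif_pos hex] using hex.choose_spec
      apply Finset.card_le_card_of_injOn pf
      · intro c hc
        have h1 := hpf c hc
        rw [Finset.mem_coe, Finset.mem_erase] at hc
        obtain ⟨p, hp1, _⟩ := h1
        exact Finset.mem_filter.mpr ⟨hback c hc.2 _ (hpf c (Finset.mem_erase.mpr hc)),
          by simp [hp1]⟩
      · intro a ha b hb hab
        obtain ⟨p, hp1, hp2⟩ := hpf a ha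
        obtain ⟨q, hq1, hq2⟩ := hpf b hb
        rw [hab] at hp1
        rw [hp1] at hq1
        injection hq1 with hpq
        subst hpq
        exact hα.1 a b p hp2 hq2
    by_cases hA : ∀ c ∈ S, (β c).isSome
    · -- augmenting path: gain one
      have hfe : (S.filter fun c => (β c).isSome) = S := Finset.filter_true_of_mem hA
      have hcount : eCount ν = eCount α + 1 := by
        have h1 := hsplit ν
        have h2 := hsplit α
        have e1 : (∑ c ∈ S, if (ν c).isSome then 1 else 0)
            = ∑ c ∈ S, if (β c).isSome then 1 else 0 :=
          Finset.sum_congr rfl fun c hc => by rw [hνS c hc]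
        have e2 : (∑ c ∈ Finset.univ \ S, if (ν c).isSome then 1 else 0)
            = ∑ c ∈ Finset.univ \ S, if (α c).isSome then 1 else 0 :=
          Finset.sum_congr rfl fun c hc => by
            rw [hνc c (Finset.mem_sdiff.mp hc).2]
        have hc1 : (S.erase t).card + 1 = S.card := Finset.card_erase_add_one htS
        rw [e1, e2, hSβ, hfe] at h1
        rw [hSα] at h2
        omega
      exact ⟨ν, ν', hMν, hMν', hcount, by omega, le_of_eq hbsum_swap.symm⟩
    · -- no gain on this path: shrink the difference set and recurse
      push_neg at hA
      obtain ⟨cb, hcbS, hcb⟩ := hA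
      have hsubB : (S.filter fun c => (β c).isSome) ⊆ S.erase cb := by
        intro c hc
        rw [Finset.mem_filter] at hc
        rw [Finset.mem_erase]
        refine ⟨?_, hc.1⟩
        rintro rfl
        exact hcb hc.2
      have hcards : (S.filter fun c => (β c).isSome).card = (S.erase t).card := by
        have h1 := Finset.card_le_card hsubB
        have h2 : (S.erase cb).card + 1 = S.card := Finset.card_erase_add_one hcbS
        have h3 : (S.erase t).card + 1 = S.card := Finset.card_erase_add_one htS
        omega
      have hcount : eCount ν = eCount α := by
        have h1 := hsplit ν
        have h2 := hsplit α
        have e1 : (∑ c ∈ S, if (ν c).isSome then 1 else 0)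
            = ∑ c ∈ S, if (β c).isSome then 1 else 0 :=
          Finset.sum_congr rfl fun c hc => by rw [hνS c hc]
        have e2 : (∑ c ∈ Finset.univ \ S, if (ν c).isSome then 1 else 0)
            = ∑ c ∈ Finset.univ \ S, if (α c).isSome then 1 else 0 :=
          Finset.sum_congr rfl fun c hc => by
            rw [hνc c (Finset.mem_sdiff.mp hc).2]
        rw [e1, e2, hSβ, hcards] at h1
        rw [hSα] at h2
        omega
      have htD : t ∈ Finset.univ.filter fun c => α c ≠ β c := by
        simp only [Finset.mem_filter, Finset.mem_univ, true_and]
        rw [hαt]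
        intro h
        rw [← h] at hβt; simp at hβt
      have hDcard : ((Finset.univ.filter fun c => α c ≠ β c).erase t).card ≤ n := by
        have := Finset.card_erase_add_one htD
        omega
      by_cases hb : bCount I ν ≤ bCount I α
      · -- recurse on (α, ν')
        have hsub2 : (Finset.univ.filter fun c => α c ≠ ν' c) ⊆
            (Finset.univ.filter fun c => α c ≠ β c).erase t := by
          intro c hc
          simp only [Finset.mem_filter, Finset.mem_univ, true_and] at hc
          by_cases h1 : c ∈ S
          · exact absurd (hν'S c h1).symm hc
          · rw [hν'c c h1] at hc
            rw [Finset.mem_erase]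
            exact ⟨fun h => h1 (h ▸ htS), by simp [hc]⟩
        obtain ⟨ρ, ρ', hMρ, hMρ', heρ, heρ', hbρ⟩ :=
          ih α ν' hα hMν' (le_trans (Finset.card_le_card hsub2) hDcard) (by omega)
        exact ⟨ρ, ρ', hMρ, hMρ', heρ, heρ', by omega⟩
      · -- recurse on (ν, β)
        have hsub2 : (Finset.univ.filter fun c => ν c ≠ β c) ⊆
            (Finset.univ.filter fun c => α c ≠ β c).erase t := by
          intro c hc
          simp only [Finset.mem_filter, Finset.mem_univ, true_and] at hc
          by_cases h1 : c ∈ S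
          · exact absurd (hνS c h1) hc
          · rw [hνc c h1] at hc
            rw [Finset.mem_erase]
            exact ⟨fun h => h1 (h ▸ htS), by simp [hc]⟩
        obtain ⟨ρ, ρ', hMρ, hMρ', heρ, heρ', hbρ⟩ :=
          ih ν β hMν hβ (le_trans (Finset.card_le_card hsub2) hDcard) (by omega)
        exact ⟨ρ, ρ', hMρ, hMρ', by omega, by omega, by omega⟩


theorem frontier_concave (I : Inst P C) (e b1 b2 b3 : ℕ)
    (h1 : OnFrontier I e b1) (h2 : OnFrontier I (e + 1) b2)
    (h3 : OnFrontier I (e + 2) b3) :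
    b1 - b2 ≤ b2 - b3 := by
  obtain ⟨μ1, hnd1, he1, hb1⟩ := h1
  obtain ⟨μ2, hnd2, he2, hb2⟩ := h2
  obtain ⟨μ3, hnd3, he3, hb3⟩ := h3
  have hb21 : b2 < b1 := by
    by_contra h
    push_neg at h
    exact hnd1.2 μ2 hnd2.1 ⟨by omega, by omega, Or.inl (by omega)⟩
  have hb32 : b3 < b2 := by
    by_contra h
    push_neg at h
    exact hnd2.2 μ3 hnd3.1 ⟨by omega, by omega, Or.inl (by omega)⟩
  obtain ⟨ν, ν', hMν, hMν', heν, heν', hbsum⟩ :=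
    key_exchange I (Finset.univ.filter fun c => μ1 c ≠ μ3 c).card μ1 μ3
      hnd1.1 hnd3.1 le_rfl (by omega)
  have hν2 : bCount I ν ≤ b2 := by
    by_contra h
    push_neg at h
    exact hnd2.2 ν hMν ⟨by omega, by omega, Or.inr (by omega)⟩
  have hν'2 : bCount I ν' ≤ b2 := by
    by_contra h
    push_neg at h
    exact hnd2.2 ν' hMν' ⟨by omega, by omega, Or.inr (by omega)⟩
  omega
end

section
/- Let μ_EB be a matching maximizing |B| among all matchings maximizing |E|, and let μ_BE be a matching maximizing |E| among all matchings maximizing |B|. Then |E(μ_EB)| − |E(μ_BE)| ≤ (1/2)·|E(μ_EB)|; equivalently, 2·|E(μ_BE)| ≥ |E(μ_EB)|. -/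
variable {P C : Type} [DecidableEq P] [Fintype P] [Fintype C]

theorem half_bound (I : Inst P C) (μEB μBE : C → Option P)
    (hEB : IsMatching I μEB ∧ (∀ ν, IsMatching I ν → eCount ν ≤ eCount μEB) ∧
      ∀ ν, IsMatching I ν → eCount ν = eCount μEB → bCount I ν ≤ bCount I μEB)
    (hBE : IsMatching I μBE ∧ (∀ ν, IsMatching I ν → bCount I ν ≤ bCount I μBE) ∧
      ∀ ν, IsMatching I ν → bCount I ν = bCount I μBE → eCount ν ≤ eCount μBE) :
    eCount μEB ≤ 2 * eCount μBE := by
  classical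
  obtain ⟨⟨hinj, helig⟩, _hEmax, _hEBb⟩ := hEB
  obtain ⟨⟨hinjB, heligB⟩, hBmax, hBEe⟩ := hBE
  -- Bm c : category c gets a beneficiary patient under μBE
  set Bm : C → Prop := fun c => ∃ p ∈ I.B c, μBE c = some p with hBmdef
  -- hybrid matching
  set ρ : C → Option P := fun c =>
    if Bm c then μBE c
    else if ∃ c', Bm c' ∧ μEB c = μBE c' then none else μEB c with hρdef
  have hρBm : ∀ c, Bm c → ρ c = μBE c := by
    intro c hc; simp only [hρdef, if_pos hc]
  have hρnotBm : ∀ c, ¬ Bm c →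
      ρ c = if ∃ c', Bm c' ∧ μEB c = μBE c' then none else μEB c := by
    intro c hc; simp only [hρdef, if_neg hc]
  -- ρ is a matching
  have hρmatch : IsMatching I ρ := by
    constructor
    · intro c c' p hc hc'
      by_cases h1 : Bm c <;> by_cases h2 : Bm c'
      · rw [hρBm c h1] at hc; rw [hρBm c' h2] at hc'
        exact hinjB c c' p hc hc'
      · rw [hρBm c h1] at hc
        rw [hρnotBm c' h2] at hc'
        by_cases h3 : ∃ c'', Bm c'' ∧ μEB c' = μBE c''
        · rw [if_pos h3] at hc'; exact absurd hc' (by simp)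
        · rw [if_neg h3] at hc'
          exact absurd ⟨c, h1, by rw [hc', hc]⟩ h3
      · rw [hρBm c' h2] at hc'
        rw [hρnotBm c h1] at hc
        by_cases h3 : ∃ c'', Bm c'' ∧ μEB c = μBE c''
        · rw [if_pos h3] at hc; exact absurd hc (by simp)
        · rw [if_neg h3] at hc
          exact absurd ⟨c', h2, by rw [hc, hc']⟩ h3
      · rw [hρnotBm c h1] at hc; rw [hρnotBm c' h2] at hc'
        by_cases h3 : ∃ c'', Bm c'' ∧ μEB c = μBE c''
        · rw [if_pos h3] at hc; exact absurd hc (by simp)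
        by_cases h4 : ∃ c'', Bm c'' ∧ μEB c' = μBE c''
        · rw [if_pos h4] at hc'; exact absurd hc' (by simp)
        rw [if_neg h3] at hc; rw [if_neg h4] at hc'
        exact hinj c c' p hc hc'
    · intro c p hc
      by_cases h1 : Bm c
      · rw [hρBm c h1] at hc; exact heligB c p hc
      · rw [hρnotBm c h1] at hc
        by_cases h3 : ∃ c'', Bm c'' ∧ μEB c = μBE c''
        · rw [if_pos h3] at hc; exact absurd hc (by simp)
        · rw [if_neg h3] at hc; exact helig c p hc
  -- bCount ρ = bCount μBE
  have hbρ : bCount I ρ = bCount I μBE := by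
    refine le_antisymm (hBmax ρ hρmatch) ?_
    unfold bCount
    apply Finset.card_le_card
    intro c hc
    simp only [Finset.mem_filter, Finset.mem_univ, true_and] at hc ⊢
    obtain ⟨p, hp, hpc⟩ := hc
    exact ⟨p, hp, by rw [hρBm c ⟨p, hp, hpc⟩]; exact hpc⟩
  -- bCount μBE ≤ eCount μBE
  have hble : bCount I μBE ≤ eCount μBE := by
    unfold bCount eCount
    apply Finset.card_le_card
    intro c hc
    simp only [Finset.mem_filter, Finset.mem_univ, true_and] at hc ⊢
    obtain ⟨p, _, hpc⟩ := hc
    rw [hpc]; rfl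
  -- eCount ρ ≤ eCount μBE
  have heρ : eCount ρ ≤ eCount μBE := hBEe ρ hρmatch hbρ
  -- key inequality: eCount μEB ≤ eCount ρ + bCount μBE
  have hkey : eCount μEB ≤ eCount ρ + bCount I μBE := by
    unfold eCount
    have hsplit := Finset.card_filter_add_card_filter_not
      (s := Finset.univ.filter fun c => (μEB c).isSome)
      (p := fun c => (ρ c).isSome)
    rw [← hsplit]
    apply Nat.add_le_add
    · -- matched in both: inject into ρ-matched
      apply Finset.card_le_card
      intro c hc
      simp only [Finset.mem_filter, Finset.mem_univ, true_and] at hc ⊢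
      exact hc.2
    · -- matched by μEB but not ρ: inject into Bm
      unfold bCount
      set T := (Finset.univ.filter fun c => (μEB c).isSome).filter
        (fun c => ¬ (ρ c).isSome) with hT
      have hex : ∀ c ∈ T, ∃ c', Bm c' ∧ μEB c = μBE c' := by
        intro c hc
        simp only [hT, Finset.mem_filter, Finset.mem_univ, true_and] at hc
        obtain ⟨h1, h2⟩ := hc
        by_cases hb : Bm c
        · exfalso
          obtain ⟨p, _, hpc⟩ := id hb
          rw [hρBm c hb, hpc] at h2
          exact h2 rfl
        · rw [hρnotBm c hb] at h2
          by_cases h3 : ∃ c', Bm c' ∧ μEB c = μBE c'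
          · exact h3
          · rw [if_neg h3] at h2; exact absurd h1 h2
      set f : C → C := fun c =>
        if h : ∃ c', Bm c' ∧ μEB c = μBE c' then h.choose else c with hf
      apply Finset.card_le_card_of_injOn f
      · intro c hc
        obtain h := hex c hc
        simp only [hf, dif_pos h]
        simp only [Finset.coe_filter, Finset.mem_coe, Finset.mem_filter, Finset.mem_univ, true_and, Set.mem_setOf_eq]
        exact h.choose_spec.1
      · intro c1 h1 c2 h2 heq
        rw [Finset.mem_coe] at h1 h2
        obtain e1 := hex c1 h1
        obtain e2 := hex c2 h2
        simp only [hf, dif_pos e1, dif_pos e2] at heq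
        have hmm : μEB c1 = μEB c2 := by
          calc μEB c1 = μBE e1.choose := e1.choose_spec.2
            _ = μBE e2.choose := by rw [heq]
            _ = μEB c2 := e2.choose_spec.2.symm
        simp only [hT, Finset.mem_filter, Finset.mem_univ, true_and] at h1
        obtain ⟨p, hp⟩ := Option.isSome_iff_exists.mp h1.1
        exact hinj c1 c2 p hp (by rw [← hmm]; exact hp)
  calc eCount μEB ≤ eCount ρ + bCount I μBE := hkey
    _ ≤ eCount μBE + eCount μBE := Nat.add_le_add heρ hble
    _ = 2 * eCount μBE := (Nat.two_mul _).symm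
end

section
/- The bound of 1/2 on the relative loss of total matches is tight: there exists an instance with |P| = 2 such that the max-eligible matching has 2 matched patients while every matching maximizing beneficiary matches (and then eligible matches) has only 1 matched patient, so (|E(μ_EB)| − |E(μ_BE)|)/|P| = 1/2. -/
variable {P C : Type} [DecidableEq P] [Fintype P] [Fintype C]

instance (I : Inst P C) [DecidableEq C] (μ : C → Option P) : Decidable (IsMatching I μ) := by
  unfold IsMatching; infer_instance

def myI : Inst (Fin 2) (Fin 2) where
  E := fun c => if c = 0 then {0} else {0, 1}
  B := fun c => if c = 0 then ∅ else {0}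
  hBE := by decide

theorem half_bound_tight :
    ∃ I : Inst (Fin 2) (Fin 2),
      (∃ μEB : Fin 2 → Option (Fin 2), IsMatching I μEB ∧ eCount μEB = 2) ∧
      (∀ μBE : Fin 2 → Option (Fin 2), IsMatching I μBE →
        (∀ ν, IsMatching I ν → bCount I ν ≤ bCount I μBE) →
        (∀ ν, IsMatching I ν → bCount I ν = bCount I μBE → eCount ν ≤ eCount μBE) →
        eCount μBE = 1) := by
  refine ⟨myI, ?_, ?_⟩
  · exact ⟨fun c => if c = 0 then some 0 else some 1, by decide, by decide⟩
  · intro μ hμ hb he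
    have h1 : bCount myI (fun c => if c = 0 then none else some 0) ≤ bCount myI μ :=
      hb _ (by decide)
    clear hb he
    revert hμ h1
    revert μ
    decide
end

section
/- For every non-dominated matching μ, |E(μ_BE)| ≤ |E(μ)| ≤ |E(μ_EB)| and |B(μ_EB)| ≤ |B(μ)| ≤ |B(μ_BE)|, where μ_BE maximizes eligible matches among beneficiary-maximal matchings and μ_EB maximizes beneficiary matches among eligible-maximal matchings. Moreover μ_BE and μ_EB are themselves non-dominated. -/
variable {P C : Type} [DecidableEq P] [Fintype P] [Fintype C]

def MaxBeneThenMaxElig (I : Inst P C) (μ : C → Option P) : Prop :=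
  IsMatching I μ ∧ (∀ ν, IsMatching I ν → bCount I ν ≤ bCount I μ) ∧
    ∀ ν, IsMatching I ν → bCount I ν = bCount I μ → eCount ν ≤ eCount μ

def MaxEligThenMaxBene (I : Inst P C) (μ : C → Option P) : Prop :=
  IsMatching I μ ∧ (∀ ν, IsMatching I ν → eCount ν ≤ eCount μ) ∧
    ∀ ν, IsMatching I ν → eCount ν = eCount μ → bCount I ν ≤ bCount I μ

theorem frontier_endpoints (I : Inst P C) (μBE μEB μ : C → Option P)
    (hBE : MaxBeneThenMaxElig I μBE) (hEB : MaxEligThenMaxBene I μEB)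
    (h : NonDominated I μ) :
    (eCount μBE ≤ eCount μ ∧ eCount μ ≤ eCount μEB) ∧
    (bCount I μEB ≤ bCount I μ ∧ bCount I μ ≤ bCount I μBE) ∧
    NonDominated I μBE ∧ NonDominated I μEB := by
  obtain ⟨hμ, hnd⟩ := h
  obtain ⟨hBEm, hBEb, hBEe⟩ := hBE
  obtain ⟨hEBm, hEBe, hEBb⟩ := hEB
  have h1 : eCount μ ≤ eCount μEB := hEBe μ hμ
  have h2 : bCount I μ ≤ bCount I μBE := hBEb μ hμ
  have h3 : eCount μBE ≤ eCount μ := by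
    by_contra hlt
    exact hnd μBE hBEm ⟨le_of_lt (not_le.mp hlt), h2, Or.inl (not_le.mp hlt)⟩
  have h4 : bCount I μEB ≤ bCount I μ := by
    by_contra hlt
    exact hnd μEB hEBm ⟨h1, le_of_lt (not_le.mp hlt), Or.inr (not_le.mp hlt)⟩
  refine ⟨⟨h3, h1⟩, ⟨h4, h2⟩, ⟨hBEm, ?_⟩, ⟨hEBm, ?_⟩⟩
  · rintro ν hν ⟨he, hb, hs⟩
    have hbeq : bCount I ν = bCount I μBE := le_antisymm (hBEb ν hν) hb
    have := hBEe ν hν hbeq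
    rcases hs with hs | hs
    · exact absurd this (not_le.mpr hs)
    · exact absurd hbeq.le (not_le.mpr hs)
  · rintro ν hν ⟨he, hb, hs⟩
    have heeq : eCount ν = eCount μEB := le_antisymm (hEBe ν hν) he
    have := hEBb ν hν heeq
    rcases hs with hs | hs
    · exact absurd heeq.le (not_le.mpr hs)
    · exact absurd this (not_le.mpr hs)
end

section
/- There exists an instance in which maximizing eligible matches first sacrifices arbitrarily many beneficiary matches: for every positive integer K there is an instance with K+2 patients and K+2 unit-quota categories such that some matching achieves K+1 beneficiary matches, while every matching with the maximum number K+2 of eligible matches has 0 beneficiary matches. -/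
variable {P C : Type} [DecidableEq P] [Fintype P] [Fintype C]

/-- Eligibility sets of the cycle instance. -/
def myE (K : ℕ) (c : Fin (K + 2)) : Finset (Fin (K + 2)) :=
  if c.val = K + 1 then {⟨K, by omega⟩}
  else if c.val = 0 then {⟨0, by omega⟩, ⟨K + 1, by omega⟩}
  else {c, ⟨c.val - 1, by omega⟩}

/-- Beneficiary sets of the cycle instance. -/
def myB (K : ℕ) (c : Fin (K + 2)) : Finset (Fin (K + 2)) :=
  if c.val = K + 1 then ∅ else {c}

lemma myE_last {K : ℕ} {c : Fin (K + 2)} (h : c.val = K + 1) :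
    myE K c = {⟨K, by omega⟩} := if_pos h

lemma myE_zero {K : ℕ} {c : Fin (K + 2)} (h1 : ¬ c.val = K + 1) (h0 : c.val = 0) :
    myE K c = {⟨0, by omega⟩, ⟨K + 1, by omega⟩} := by
  unfold myE; rw [if_neg h1, if_pos h0]

lemma myE_mid {K : ℕ} {c : Fin (K + 2)} (h1 : ¬ c.val = K + 1) (h0 : ¬ c.val = 0) :
    myE K c = {c, ⟨c.val - 1, by omega⟩} := by
  unfold myE; rw [if_neg h1, if_neg h0]

lemma myB_last {K : ℕ} {c : Fin (K + 2)} (h : c.val = K + 1) : myB K c = ∅ := if_pos h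

lemma myB_rest {K : ℕ} {c : Fin (K + 2)} (h : ¬ c.val = K + 1) : myB K c = {c} := if_neg h

/-- The cycle instance. -/
def myInst (K : ℕ) : Inst (Fin (K + 2)) (Fin (K + 2)) where
  E := myE K
  B := myB K
  hBE c := by
    by_cases h1 : c.val = K + 1
    · rw [myB_last h1]; exact Finset.empty_subset _
    · rw [myB_rest h1]
      intro p hp
      rw [Finset.mem_singleton] at hp
      subst hp
      by_cases h0 : p.val = 0
      · rw [myE_zero h1 h0]
        exact Finset.mem_insert.mpr (Or.inl (Fin.ext h0))
      · rw [myE_mid h1 h0]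
        exact Finset.mem_insert_self _ _

set_option maxHeartbeats 2000000 in
theorem unbounded_beneficiary_loss (K : ℕ) (hK : 1 ≤ K) :
    ∃ I : Inst (Fin (K + 2)) (Fin (K + 2)),
      (∃ μ, IsMatching I μ ∧ bCount I μ = K + 1) ∧
      (∃ μ, IsMatching I μ ∧ eCount μ = K + 2) ∧
      (∀ μ, IsMatching I μ → eCount μ = K + 2 → bCount I μ = 0) := by
  refine ⟨myInst K, ?_, ?_, ?_⟩
  · -- identity matching: K+1 beneficiary matches
    refine ⟨fun c => if c.val = K + 1 then none else some c, ⟨?_, ?_⟩, ?_⟩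
    · intro c c' p hc hc'
      by_cases h : c.val = K + 1 <;> by_cases h' : c'.val = K + 1 <;>
        simp [h, h'] at hc hc' <;> omega
    · intro c p hcp
      by_cases h1 : c.val = K + 1
      · simp [h1] at hcp
      · simp only [if_neg h1, Option.some.injEq] at hcp
        subst hcp
        show c ∈ myE K c
        by_cases h0 : c.val = 0
        · rw [myE_zero h1 h0]
          exact Finset.mem_insert.mpr (Or.inl (Fin.ext h0))
        · rw [myE_mid h1 h0]
          exact Finset.mem_insert_self _ _
    · unfold bCount
      have hset : (Finset.univ.filter fun c : Fin (K + 2) =>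
          ∃ p ∈ (myInst K).B c, (if c.val = K + 1 then none else some c) = some p)
          = Finset.univ.erase ⟨K + 1, by omega⟩ := by
        ext c
        simp only [Finset.mem_filter, Finset.mem_univ, true_and, Finset.mem_erase, and_true]
        constructor
        · rintro ⟨p, hpB, hp⟩
          intro hc
          rw [hc] at hp
          simp at hp
        · intro hc
          have h1 : ¬ c.val = K + 1 := fun h => hc (Fin.ext h)
          refine ⟨c, ?_, by rw [if_neg h1]⟩
          show c ∈ myB K c
          rw [myB_rest h1]
          exact Finset.mem_singleton_self c
      beta_reduce
      convert (congrArg Finset.card hset).trans (Finset.card_erase_of_mem (Finset.mem_univ _))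
      simp
  · -- shift matching: perfect, K+2 eligible matches
    refine ⟨fun c => some (if c.val = 0 then ⟨K + 1, by omega⟩ else ⟨c.val - 1, by omega⟩),
      ⟨?_, ?_⟩, ?_⟩
    · intro c c' p hc hc'
      simp only [Option.some.injEq] at hc hc'
      by_cases h : c.val = 0 <;> by_cases h' : c'.val = 0
      · exact Fin.ext (h.trans h'.symm)
      · exfalso
        rw [if_pos h] at hc
        rw [if_neg h'] at hc'
        have hv : K + 1 = c'.val - 1 := congrArg Fin.val (hc.trans hc'.symm)
        have := c'.isLt
        omega
      · exfalso
        rw [if_neg h] at hc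
        rw [if_pos h'] at hc'
        have hv : c.val - 1 = K + 1 := congrArg Fin.val (hc.trans hc'.symm)
        have := c.isLt
        omega
      · rw [if_neg h] at hc
        rw [if_neg h'] at hc'
        have hv : c.val - 1 = c'.val - 1 := congrArg Fin.val (hc.trans hc'.symm)
        exact Fin.ext (by omega)
    · intro c p hcp
      simp only [Option.some.injEq] at hcp
      subst hcp
      show _ ∈ myE K c
      by_cases h1 : c.val = K + 1
      · have h0 : ¬ c.val = 0 := by omega
        rw [myE_last h1, if_neg h0, Finset.mem_singleton]
        exact Fin.ext (by simp [h1])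
      · by_cases h0 : c.val = 0
        · rw [myE_zero h1 h0, if_pos h0]
          exact Finset.mem_insert.mpr (Or.inr (Finset.mem_singleton_self _))
        · rw [myE_mid h1 h0, if_neg h0]
          exact Finset.mem_insert.mpr (Or.inr (Finset.mem_singleton_self _))
    · unfold eCount
      have hset : (Finset.univ.filter fun c : Fin (K + 2) =>
          (some (if c.val = 0 then (⟨K + 1, by omega⟩ : Fin (K + 2))
            else ⟨c.val - 1, by omega⟩)).isSome) = Finset.univ := by
        apply Finset.filter_true_of_mem
        intro c _
        simp
      rw [hset]
      simp
  · -- every perfect matching has zero beneficiaries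
    intro μ hμ he
    have hsome : ∀ c, (μ c).isSome := by
      have hsub : (Finset.univ.filter fun c : Fin (K + 2) => (μ c).isSome) = Finset.univ := by
        apply Finset.eq_univ_of_card
        unfold eCount at he
        simpa using he
      intro c
      have := Finset.mem_filter.mp (hsub ▸ Finset.mem_univ c)
      exact this.2
    have hex : ∀ c, ∃ p, μ c = some p := fun c => Option.isSome_iff_exists.mp (hsome c)
    choose f hμf using hex
    have hinj : ∀ c c', f c = f c' → c = c' := by
      intro c c' h
      exact hμ.1 c c' (f c) (hμf c) (by rw [hμf c', h])
    have helig : ∀ c, f c ∈ myE K c := fun c => hμ.2 c (f c) (hμf c)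
    have key : ∀ d, d ≤ K → f ⟨K + 1 - d, by omega⟩ = ⟨K - d, by omega⟩ := by
      intro d
      induction d with
      | zero =>
        intro _
        have h := helig ⟨K + 1, by omega⟩
        rw [myE_last (c := ⟨K + 1, by omega⟩) rfl, Finset.mem_singleton] at h
        exact h
      | succ d ih =>
        intro hd
        have ihd := ih (by omega)
        have h := helig ⟨K + 1 - (d + 1), by omega⟩
        rw [myE_mid (c := ⟨K + 1 - (d + 1), by omega⟩) (show ¬ (K + 1 - (d + 1) = K + 1) by omega)
          (show ¬ (K + 1 - (d + 1) = 0) by omega), Finset.mem_insert,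
          Finset.mem_singleton] at h
        rcases h with h | h
        · exfalso
          have hval : (⟨K + 1 - (d + 1), by omega⟩ : Fin (K + 2)) = ⟨K - d, by omega⟩ :=
            Fin.ext (show K + 1 - (d + 1) = K - d by omega)
          have heq := hinj _ _ (h.trans (hval.trans ihd.symm))
          have h2 : K + 1 - (d + 1) = K + 1 - d := congrArg Fin.val heq
          omega
        · rw [h]
          exact Fin.ext (show K + 1 - (d + 1) - 1 = K - (d + 1) by omega)
    have f1 : f ⟨1, by omega⟩ = ⟨0, by omega⟩ := by
      have h := key K le_rfl
      have e1 : (⟨K + 1 - K, by omega⟩ : Fin (K + 2)) = ⟨1, by omega⟩ :=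
        Fin.ext (show K + 1 - K = 1 by omega)
      have e2 : (⟨K - K, by omega⟩ : Fin (K + 2)) = ⟨0, by omega⟩ :=
        Fin.ext (show K - K = 0 by omega)
      rw [e1, e2] at h
      exact h
    have f0 : f ⟨0, by omega⟩ = ⟨K + 1, by omega⟩ := by
      have h := helig ⟨0, by omega⟩
      rw [myE_zero (c := ⟨0, by omega⟩) (show ¬ (0 = K + 1) by omega) rfl, Finset.mem_insert,
        Finset.mem_singleton] at h
      rcases h with h | h
      · exfalso
        have heq := hinj _ _ (h.trans f1.symm)
        have h2 : 0 = 1 := congrArg Fin.val heq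
        omega
      · exact h
    have hne : ∀ c : Fin (K + 2), ¬ c.val = K + 1 → f c ≠ c := by
      intro c hc
      by_cases h0 : c.val = 0
      · have hceq : c = ⟨0, by omega⟩ := Fin.ext h0
        rw [hceq, f0]
        intro h
        have h2 : K + 1 = 0 := congrArg Fin.val h
        omega
      · have hlt := c.isLt
        have hd : K + 1 - (K + 1 - c.val) = c.val := by omega
        have hkey := key (K + 1 - c.val) (by omega)
        have hceq : c = ⟨K + 1 - (K + 1 - c.val), by omega⟩ :=
          Fin.ext (show c.val = K + 1 - (K + 1 - c.val) by omega)
        have h3 : f c = ⟨K - (K + 1 - c.val), by omega⟩ := (congrArg f hceq).trans hkey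
        intro h
        have h2 : K - (K + 1 - c.val) = c.val := congrArg Fin.val (h3.symm.trans h)
        omega
    unfold bCount
    simp only [Finset.card_eq_zero, Finset.filter_eq_empty_iff]
    intro c _
    rintro ⟨p, hpB, hp⟩
    rw [hμf c] at hp
    simp only [Option.some.injEq] at hp
    subst hp
    by_cases h1 : c.val = K + 1
    · rw [show (myInst K).B c = ∅ from myB_last h1] at hpB
      exact absurd hpB (Finset.notMem_empty _)
    · rw [show (myInst K).B c = {c} from myB_rest h1, Finset.mem_singleton] at hpB
      exact hne c h1 hpB
end

section
/- For each point (e,b) on the non-domination frontier and any priority order π = (π_c)_{c∈C}, among all matchings achieving (e,b) there exists one that respects priority: no unmatched patient has strictly higher priority than a matched patient for the same category. -/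
variable {P C : Type} [DecidableEq P] [Fintype P] [Fintype C]

structure Priority (I : Inst P C) where
  lt : C → P → P → Prop
  isStrict : ∀ c, IsStrictTotalOrder P (lt c)
  bene_top : ∀ c p q, p ∈ I.B c → q ∈ I.E c → q ∉ I.B c → lt c p q
  elig_top : ∀ c p q, p ∈ I.E c → q ∉ I.E c → lt c p q

def RespectsPriority (I : Inst P C) (π : Priority I) (μ : C → Option P) : Prop :=
  ∀ c p pp, μ c = some p → (∀ cc, μ cc ≠ some pp) → π.lt c p pp

open Classical in
noncomputable def prank (I : Inst P C) (π : Priority I) (c : C) (p : P) : ℕ :=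
  (Finset.univ.filter fun q => π.lt c q p).card

open Classical in
noncomputable def phi (I : Inst P C) (π : Priority I) (μ : C → Option P) : ℕ :=
  ∑ c, (μ c).elim 0 (prank I π c)

lemma prank_lt (I : Inst P C) (π : Priority I) (c : C) {p q : P}
    (h : π.lt c q p) : prank I π c q < prank I π c p := by
  classical
  haveI := π.isStrict c
  apply Finset.card_lt_card
  constructor
  · intro x hx
    simp only [Finset.mem_filter, Finset.mem_univ, true_and] at hx ⊢
    exact trans_of (π.lt c) hx h
  · intro hsub
    have hq : q ∈ Finset.univ.filter fun x => π.lt c x p := by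
      simp [h]
    have := hsub hq
    simp only [Finset.mem_filter, Finset.mem_univ, true_and] at this
    exact irrefl_of (π.lt c) q this

lemma aux_step (I : Inst P C) (π : Priority I) :
    ∀ n (μ : C → Option P), phi I π μ ≤ n → NonDominated I μ →
      ∃ μ', IsMatching I μ' ∧ eCount μ' = eCount μ ∧ bCount I μ' = bCount I μ ∧
        RespectsPriority I π μ' := by
  classical
  intro n
  induction n with
  | zero =>
    intro μ hphi hnd
    by_cases hres : RespectsPriority I π μ
    · exact ⟨μ, hnd.1, rfl, rfl, hres⟩
    · exfalso
      simp only [RespectsPriority, not_forall] at hres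
      obtain ⟨c, p, pp, hc, hun, hlt⟩ := hres
      haveI := π.isStrict c
      have hne : pp ≠ p := by
        intro hE; subst hE; exact hun c hc
      have hlt' : π.lt c pp p := by
        rcases trichotomous_of (π.lt c) pp p with h' | h' | h'
        · exact h'
        · exact absurd h' hne
        · exact absurd h' hlt
      have : prank I π c pp < prank I π c p := prank_lt I π c hlt'
      have hterm : (μ c).elim 0 (prank I π c) ≤ phi I π μ :=
        Finset.single_le_sum (f := fun c => (μ c).elim 0 (prank I π c))
          (fun _ _ => Nat.zero_le _) (Finset.mem_univ c)
      rw [hc] at hterm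
      simp only [Option.elim] at hterm
      omega
  | succ n ih =>
    intro μ hphi hnd
    by_cases hres : RespectsPriority I π μ
    · exact ⟨μ, hnd.1, rfl, rfl, hres⟩
    simp only [RespectsPriority, not_forall] at hres
    obtain ⟨c, p, pp, hc, hun, hlt⟩ := hres
    haveI := π.isStrict c
    have hne : pp ≠ p := fun hE => hun c (hE ▸ hc)
    have hlt' : π.lt c pp p := by
      rcases trichotomous_of (π.lt c) pp p with h' | h' | h'
      · exact h'
      · exact absurd h' hne
      · exact absurd h' hlt
    -- pp eligible
    have hpE : p ∈ I.E c := hnd.1.2 c p hc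
    have hppE : pp ∈ I.E c := by
      by_contra hcon
      exact hlt (π.elig_top c p pp hpE hcon)
    -- beneficiary preservation
    have hppB : p ∈ I.B c → pp ∈ I.B c := by
      intro hpB
      by_contra hcon
      exact hlt (π.bene_top c p pp hpB hppE hcon)
    set μ' : C → Option P := Function.update μ c (some pp) with hμ'
    have hμ'c : μ' c = some pp := Function.update_self _ _ _
    have hμ'ne : ∀ c', c' ≠ c → μ' c' = μ c' := fun c' h =>
      Function.update_of_ne h _ _
    -- μ' is a matching
    have hmatch : IsMatching I μ' := by
      constructor
      · intro c1 c2 q h1 h2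
        by_cases e1 : c1 = c <;> by_cases e2 : c2 = c
        · subst e1; subst e2; rfl
        · subst e1
          rw [hμ'c] at h1
          rw [hμ'ne c2 e2] at h2
          exact absurd h2 (Option.some_injective _ h1 ▸ hun c2)
        · subst e2
          rw [hμ'c] at h2
          rw [hμ'ne c1 e1] at h1
          exact absurd h1 (Option.some_injective _ h2 ▸ hun c1)
        · rw [hμ'ne c1 e1] at h1
          rw [hμ'ne c2 e2] at h2
          exact hnd.1.1 c1 c2 q h1 h2
      · intro c' q hq
        by_cases e1 : c' = c
        · subst e1
          rw [hμ'c] at hq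
          exact (Option.some_injective _ hq) ▸ hppE
        · rw [hμ'ne c' e1] at hq
          exact hnd.1.2 c' q hq
    -- eCount equal
    have heq : eCount μ' = eCount μ := by
      unfold eCount
      congr 1
      apply Finset.filter_congr
      intro c' _
      by_cases e1 : c' = c
      · subst e1; rw [hμ'c, hc]; simp
      · rw [hμ'ne c' e1]
    -- bCount ≥
    have hble : bCount I μ ≤ bCount I μ' := by
      unfold bCount
      apply Finset.card_le_card
      intro c' hc'
      simp only [Finset.mem_filter, Finset.mem_univ, true_and] at hc' ⊢
      obtain ⟨q, hqB, hq⟩ := hc'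
      by_cases e1 : c' = c
      · subst e1
        rw [hc] at hq
        have := Option.some_injective _ hq
        subst this
        exact ⟨pp, hppB hqB, hμ'c⟩
      · exact ⟨q, hqB, by rw [hμ'ne c' e1]; exact hq⟩
    -- bCount equal, else μ' dominates μ
    have hbeq : bCount I μ' = bCount I μ := by
      by_contra hcon
      have hglt : bCount I μ < bCount I μ' := lt_of_le_of_ne hble (fun h => hcon h.symm)
      exact hnd.2 μ' hmatch ⟨heq.ge, hble, Or.inr hglt⟩
    -- phi decreases
    have hphi' : phi I π μ' < phi I π μ := by
      unfold phi
      apply Finset.sum_lt_sum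
      · intro c' _
        by_cases e1 : c' = c
        · subst e1
          rw [hμ'c, hc]
          simp only [Option.elim]
          exact le_of_lt (prank_lt I π _ hlt')
        · rw [hμ'ne c' e1]
      · exact ⟨c, Finset.mem_univ c, by
          rw [hμ'c, hc]; simpa using prank_lt I π c hlt'⟩
    have hnd' : NonDominated I μ' := by
      refine ⟨hmatch, fun ν hν hdom => hnd.2 ν hν ?_⟩
      rw [Dominates, heq, hbeq] at hdom
      exact hdom
    obtain ⟨μ'', h1, h2, h3, h4⟩ := ih μ' (by omega) hnd'
    exact ⟨μ'', h1, h2.trans heq, h3.trans hbeq, h4⟩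

theorem frontier_point_respects_priority (I : Inst P C) (π : Priority I) (e b : ℕ)
    (h : OnFrontier I e b) :
    ∃ μ, IsMatching I μ ∧ eCount μ = e ∧ bCount I μ = b ∧
      RespectsPriority I π μ := by
  obtain ⟨μ, hnd, he, hb⟩ := h
  obtain ⟨μ', h1, h2, h3, h4⟩ := aux_step I π (phi I π μ) μ le_rfl hnd
  exact ⟨μ', h1, h2.trans he, h3.trans hb, h4⟩
end

section
/- Among all matchings achieving a given frontier point (e,b), any matching minimizing the rank sum R(μ) = Σ_{μ(c)=p} R_c(p) respects priority, where R_c(p) is the position of p in the priority order π_c. -/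
variable {P C : Type} [DecidableEq P] [Fintype P] [Fintype C]

open scoped Classical

noncomputable def rankOf (I : Inst P C) (π : Priority I) (c : C) (p : P) : ℕ :=
  (Finset.univ.filter fun q => π.lt c q p).card + 1

noncomputable def rankSum (I : Inst P C) (π : Priority I) (μ : C → Option P) : ℕ :=
  ∑ c, (μ c).elim 0 (rankOf I π c)


theorem min_ranksum_respects_priority (I : Inst P C) (π : Priority I) (e b : ℕ)
    (μ : C → Option P) (hf : OnFrontier I e b)
    (hμ : IsMatching I μ) (he : eCount μ = e) (hb : bCount I μ = b)
    (hmin : ∀ ν, IsMatching I ν → eCount ν = e → bCount I ν = b →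
      rankSum I π μ ≤ rankSum I π ν) :
    RespectsPriority I π μ := by
  intro c p pp hc hpp
  by_contra hnlt
  haveI := π.isStrict c
  have hne : pp ≠ p := by
    intro h; exact hpp c (h ▸ hc)
  have hlt : π.lt c pp p := by
    rcases trichotomous_of (π.lt c) pp p with h | h | h
    · exact h
    · exact absurd h hne
    · exact absurd h hnlt
  have hpE : p ∈ I.E c := hμ.2 c p hc
  have hppE : pp ∈ I.E c := by
    by_contra h
    exact hnlt (π.elig_top c p pp hpE h)
  set ν : C → Option P := Function.update μ c (some pp) with hν
  have hνc : ν c = some pp := Function.update_self c (some pp) μ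
  have hνne : ∀ c', c' ≠ c → ν c' = μ c' := fun c' h => Function.update_of_ne h _ _
  have hνM : IsMatching I ν := by
    constructor
    · intro c1 c2 q h1 h2
      by_cases e1 : c1 = c <;> by_cases e2 : c2 = c
      · rw [e1, e2]
      · rw [e1, hνc] at h1
        rw [hνne c2 e2] at h2
        cases h1
        exact absurd h2 (hpp c2)
      · rw [e2, hνc] at h2
        rw [hνne c1 e1] at h1
        cases h2
        exact absurd h1 (hpp c1)
      · exact hμ.1 c1 c2 q (by rwa [hνne c1 e1] at h1) (by rwa [hνne c2 e2] at h2)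
    · intro c' q h
      by_cases e1 : c' = c
      · subst e1; rw [hνc] at h; cases h; exact hppE
      · exact hμ.2 c' q (by rwa [hνne c' e1] at h)
  have heν : eCount ν = e := by
    rw [← he]
    unfold eCount
    congr 1
    apply Finset.filter_congr
    intro x _
    by_cases hx : x = c
    · subst hx; rw [hνc, hc]; simp
    · rw [hνne x hx]
  -- rank comparison
  have hrank : rankOf I π c pp < rankOf I π c p := by
    unfold rankOf
    have hsub : (Finset.univ.filter fun q => π.lt c q pp) ⊂
        (Finset.univ.filter fun q => π.lt c q p) := by
      constructor
      · intro q hq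
        simp only [Finset.mem_filter, Finset.mem_univ, true_and] at hq ⊢
        exact _root_.trans hq hlt
      · intro h
        have : pp ∈ Finset.univ.filter fun q => π.lt c q p := by
          simp only [Finset.mem_filter, Finset.mem_univ, true_and]; exact hlt
        have := h this
        simp only [Finset.mem_filter, Finset.mem_univ, true_and] at this
        exact irrefl pp this
    exact Nat.add_lt_add_right (Finset.card_lt_card hsub) 1
  -- bCount analysis
  by_cases hppB : pp ∈ I.B c
  · by_cases hpB : p ∈ I.B c
    · -- same bCount, rankSum contradiction
      have hbν : bCount I ν = b := by
        rw [← hb]; unfold bCount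
        congr 1
        apply Finset.filter_congr
        intro x _
        by_cases hx : x = c
        · subst hx; rw [hνc, hc]
          simp only [Option.some.injEq, eq_iff_iff]
          constructor
          · rintro ⟨q, hq, rfl⟩; exact ⟨p, hpB, rfl⟩
          · rintro ⟨q, hq, rfl⟩; exact ⟨pp, hppB, rfl⟩
        · rw [hνne x hx]
      have hsum : rankSum I π ν < rankSum I π μ := by
        unfold rankSum
        apply Finset.sum_lt_sum
        · intro x _
          by_cases hx : x = c
          · subst hx; rw [hνc, hc]; exact le_of_lt hrank
          · rw [hνne x hx]
        · exact ⟨c, Finset.mem_univ c, by rw [hνc, hc]; exact hrank⟩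
      exact absurd (hmin ν hνM heν hbν) (not_le.mpr hsum)
    · -- bCount increases: dominates the frontier matching
      have hbν : b < bCount I ν := by
        rw [← hb]; unfold bCount
        apply Finset.card_lt_card
        constructor
        · intro x hx
          simp only [Finset.mem_filter, Finset.mem_univ, true_and] at hx ⊢
          obtain ⟨q, hq, hxq⟩ := hx
          by_cases hxc : x = c
          · subst hxc; rw [hc] at hxq; cases hxq; exact absurd hq hpB
          · exact ⟨q, hq, by rw [hνne x hxc]; exact hxq⟩
        · intro h
          have hcν : c ∈ Finset.univ.filter fun x => ∃ q ∈ I.B x, ν x = some q := by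
            simp only [Finset.mem_filter, Finset.mem_univ, true_and]
            exact ⟨pp, hppB, hνc⟩
          have := h hcν
          simp only [Finset.mem_filter, Finset.mem_univ, true_and] at this
          obtain ⟨q, hq, hxq⟩ := this
          rw [hc] at hxq; cases hxq; exact absurd hq hpB
      obtain ⟨μ₀, hμ₀, he₀, hb₀⟩ := hf
      exact hμ₀.2 ν hνM ⟨he₀ ▸ heν ▸ le_refl e, by omega, Or.inr (by omega)⟩
  · -- pp not beneficiary, so p not either
    have hpB : p ∉ I.B c := fun h => hnlt (π.bene_top c p pp h hppE hppB)
    have hbν : bCount I ν = b := by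
      rw [← hb]; unfold bCount
      congr 1
      apply Finset.filter_congr
      intro x _
      by_cases hx : x = c
      · subst hx; rw [hνc, hc]
        simp only [Option.some.injEq, eq_iff_iff]
        constructor
        · rintro ⟨q, hq, rfl⟩; exact absurd hq hppB
        · rintro ⟨q, hq, rfl⟩; exact absurd hq hpB
      · rw [hνne x hx]
    have hsum : rankSum I π ν < rankSum I π μ := by
      unfold rankSum
      apply Finset.sum_lt_sum
      · intro x _
        by_cases hx : x = c
        · subst hx; rw [hνc, hc]; exact le_of_lt hrank
        · rw [hνne x hx]
      · exact ⟨c, Finset.mem_univ c, by rw [hνc, hc]; exact hrank⟩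
    exact absurd (hmin ν hνM heν hbν) (not_le.mpr hsum)
end

section
/- No mechanism that respects the beneficiary-share guarantee approximately on the frontier induces a substitutable choice rule: there exists a problem with 6 patients, 5 unit-quota categories, and β* = 0.2 such that for any such mechanism, the induced choice rule C violates substitutability, i.e., there exist X' ⊆ X with C(X) ∩ X' ⊄ C(X'). -/
variable {P C : Type} [DecidableEq P] [Fintype P] [Fintype C]

def share (I : Inst P C) (μ : C → Option P) : ℚ :=
  (bCount I μ : ℚ) / (eCount μ : ℚ)

def ApproxRespects (I : Inst P C) (β : ℚ) (μ : C → Option P) : Prop :=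
  ((∃ μBE, MaxBeneThenMaxElig I μBE ∧ β < share I μBE) →
    NonDominated I μ ∧ β ≤ share I μ ∧
      ∀ ν, NonDominated I ν → β ≤ share I ν → share I μ ≤ share I ν) ∧
  ((∃ μBE, MaxBeneThenMaxElig I μBE ∧ share I μBE ≤ β) → MaxBeneThenMaxElig I μ)

def restrict (I : Inst P C) (X : Finset P) : Inst P C where
  E := fun c => I.E c ∩ X
  B := fun c => I.B c ∩ X
  hBE := fun c => Finset.inter_subset_inter (I.hBE c) (Finset.Subset.refl X)

def choiceOf (φ : Finset P → (C → Option P)) (X : Finset P) : Finset P :=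
  X.filter fun p => ∃ c, φ X c = some p

/- ### Auxiliary material -/

instance [DecidableEq C] (I : Inst P C) (μ : C → Option P) : Decidable (IsMatching I μ) := by
  unfold IsMatching; infer_instance

instance (I : Inst P C) (μ' μ : C → Option P) : Decidable (Dominates I μ' μ) := by
  unfold Dominates; infer_instance

def I0 : Inst (Fin 6) (Fin 5) where
  E := ![{0,1},{1,2},{2,4},{5,3},{0}]
  B := ![{0},∅,∅,{5},∅]
  hBE := by decide

def X1 : Finset (Fin 6) := {0,1,2,4}

/-- Reduce a universally quantified statement over matchings to finitely many
coordinate choices. -/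
lemma bridge (I : Inst (Fin 6) (Fin 5)) (Q : (Fin 5 → Option (Fin 6)) → Prop)
    (L : Fin 5 → List (Option (Fin 6)))
    (hL : ∀ c, none ∈ L c ∧ ∀ p ∈ I.E c, some p ∈ L c)
    (h : ∀ x0 ∈ L 0, ∀ x1 ∈ L 1, ∀ x2 ∈ L 2, ∀ x3 ∈ L 3, ∀ x4 ∈ L 4,
      Q ![x0, x1, x2, x3, x4]) :
    ∀ ν, IsMatching I ν → Q ν := by
  intro ν hν
  have hc : ∀ c, ν c ∈ L c := by
    intro c
    cases hh : ν c with
    | none => exact (hL c).1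
    | some p => exact (hL c).2 p (hν.2 c p hh)
  have heta : ν = ![ν 0, ν 1, ν 2, ν 3, ν 4] := by
    funext c; fin_cases c <;> rfl
  rw [heta]
  exact h (ν 0) (hc 0) (ν 1) (hc 1) (ν 2) (hc 2) (ν 3) (hc 3) (ν 4) (hc 4)

def μBE : Fin 5 → Option (Fin 6) := ![some 0, some 1, some 2, some 5, none]
def ν51 : Fin 5 → Option (Fin 6) := ![some 1, some 2, some 4, some 5, some 0]
def μX : Fin 5 → Option (Fin 6) := ![some 0, some 1, some 2, none, none]

def QF : (Fin 5 → Option (Fin 6)) → Prop := fun ν =>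
  IsMatching (restrict I0 Finset.univ) ν →
    (bCount (restrict I0 Finset.univ) ν ≤ 2 ∧
      (bCount (restrict I0 Finset.univ) ν = 2 → eCount ν ≤ 4) ∧
      ¬ Dominates (restrict I0 Finset.univ) ν ν51 ∧
      (eCount ν = 5 → ∀ p ∈ X1, ∃ c, ν c = some p))

instance : DecidablePred QF := by unfold QF; infer_instance

def LF : Fin 5 → List (Option (Fin 6)) :=
  ![[none, some 0, some 1], [none, some 1, some 2], [none, some 2, some 4],
    [none, some 5, some 3], [none, some 0]]

lemma hLF : ∀ c, none ∈ LF c ∧ ∀ p ∈ (restrict I0 Finset.univ).E c, some p ∈ LF c := by decide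

set_option synthInstance.maxSize 2000 in
set_option synthInstance.maxHeartbeats 1000000 in
set_option maxHeartbeats 2000000 in
lemma hhF : ∀ x0 ∈ LF 0, ∀ x1 ∈ LF 1, ∀ x2 ∈ LF 2, ∀ x3 ∈ LF 3, ∀ x4 ∈ LF 4,
    QF ![x0, x1, x2, x3, x4] := by decide

lemma keyFull : ∀ ν, IsMatching (restrict I0 Finset.univ) ν → QF ν :=
  bridge (restrict I0 Finset.univ) QF LF hLF hhF

def QX : (Fin 5 → Option (Fin 6)) → Prop := fun ν =>
  IsMatching (restrict I0 X1) ν →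
    (bCount (restrict I0 X1) ν ≤ 1 ∧
      (bCount (restrict I0 X1) ν = 1 → eCount ν ≤ 3) ∧
      (bCount (restrict I0 X1) ν = 1 → ∃ p ∈ X1, ∀ c, ν c ≠ some p))

instance : DecidablePred QX := by unfold QX; infer_instance

def LX : Fin 5 → List (Option (Fin 6)) :=
  ![[none, some 0, some 1], [none, some 1, some 2], [none, some 2, some 4],
    [none], [none, some 0]]

lemma hLX : ∀ c, none ∈ LX c ∧ ∀ p ∈ (restrict I0 X1).E c, some p ∈ LX c := by decide

set_option synthInstance.maxSize 2000 in
set_option synthInstance.maxHeartbeats 1000000 in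
set_option maxHeartbeats 2000000 in
lemma hhX : ∀ x0 ∈ LX 0, ∀ x1 ∈ LX 1, ∀ x2 ∈ LX 2, ∀ x3 ∈ LX 3, ∀ x4 ∈ LX 4,
    QX ![x0, x1, x2, x3, x4] := by decide

lemma keyX : ∀ ν, IsMatching (restrict I0 X1) ν → QX ν :=
  bridge (restrict I0 X1) QX LX hLX hhX

lemma factsBE : IsMatching (restrict I0 Finset.univ) μBE ∧
    eCount μBE = 4 ∧ bCount (restrict I0 Finset.univ) μBE = 2 := by decide

lemma facts51 : IsMatching (restrict I0 Finset.univ) ν51 ∧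
    eCount ν51 = 5 ∧ bCount (restrict I0 Finset.univ) ν51 = 1 := by decide

lemma factsX : IsMatching (restrict I0 X1) μX ∧
    eCount μX = 3 ∧ bCount (restrict I0 X1) μX = 1 := by decide

lemma maxBE : MaxBeneThenMaxElig (restrict I0 Finset.univ) μBE := by
  refine ⟨factsBE.1, fun ν hν => ?_, fun ν hν hb => ?_⟩
  · rw [factsBE.2.2]; exact (keyFull ν hν hν).1
  · rw [factsBE.2.1]; exact (keyFull ν hν hν).2.1 (hb.trans factsBE.2.2)

lemma nd51 : NonDominated (restrict I0 Finset.univ) ν51 :=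
  ⟨facts51.1, fun ν hν => (keyFull ν hν hν).2.2.1⟩

lemma maxX : MaxBeneThenMaxElig (restrict I0 X1) μX := by
  refine ⟨factsX.1, fun ν hν => ?_, fun ν hν hb => ?_⟩
  · rw [factsX.2.2]; exact (keyX ν hν hν).1
  · rw [factsX.2.1]; exact (keyX ν hν hν).2.1 (hb.trans factsX.2.2)

theorem no_substitutable_mechanism :
    ∃ I : Inst (Fin 6) (Fin 5),
      ∀ φ : Finset (Fin 6) → (Fin 5 → Option (Fin 6)),
        (∀ X, IsMatching (restrict I X) (φ X) ∧
          ApproxRespects (restrict I X) (1/5) (φ X)) →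
        ∃ X' X : Finset (Fin 6), X' ⊆ X ∧
          ¬ (choiceOf φ X ∩ X' ⊆ choiceOf φ X') := by
  refine ⟨I0, fun φ hφ => ?_⟩
  obtain ⟨hmU, haU⟩ := hφ Finset.univ
  obtain ⟨hmX, haX⟩ := hφ X1
  -- analysis on the full set
  have hshBE : share (restrict I0 Finset.univ) μBE = 1/2 := by
    unfold share; rw [factsBE.2.1, factsBE.2.2]; norm_num
  obtain ⟨hndU, hgeU, hminU⟩ := haU.1 ⟨μBE, maxBE, by rw [hshBE]; norm_num⟩
  have hsh51 : share (restrict I0 Finset.univ) ν51 = 1/5 := by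
    unfold share; rw [facts51.2.1, facts51.2.2]; norm_num
  have hle := hminU ν51 nd51 (by rw [hsh51])
  rw [hsh51] at hle
  have hsU : share (restrict I0 Finset.univ) (φ Finset.univ) = 1/5 := le_antisymm hle hgeU
  have he5 : eCount (φ Finset.univ) ≤ 5 := by
    have := Finset.card_filter_le (Finset.univ : Finset (Fin 5))
      (fun c => (φ Finset.univ c).isSome)
    simpa [eCount] using this
  unfold share at hsU
  have hene : eCount (φ Finset.univ) ≠ 0 := by
    intro h
    rw [h, Nat.cast_zero, div_zero] at hsU
    norm_num at hsU
  have he0 : ((eCount (φ Finset.univ) : ℚ)) ≠ 0 := Nat.cast_ne_zero.2 hene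
  have h2 : (bCount (restrict I0 Finset.univ) (φ Finset.univ) : ℚ) * 5 =
      1 * (eCount (φ Finset.univ) : ℚ) := (div_eq_div_iff he0 (by norm_num)).1 hsU
  have h3 : bCount (restrict I0 Finset.univ) (φ Finset.univ) * 5 =
      1 * eCount (φ Finset.univ) := by exact_mod_cast h2
  have he : eCount (φ Finset.univ) = 5 := by omega
  have hmatched := (keyFull (φ Finset.univ) hmU hmU).2.2.2 he
  -- analysis on X1
  have hshX : share (restrict I0 X1) μX = 1/3 := by
    unfold share; rw [factsX.2.1, factsX.2.2]; norm_num
  obtain ⟨hndX, hgeX, -⟩ := haX.1 ⟨μX, maxX, by rw [hshX]; norm_num⟩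
  have hb1 : bCount (restrict I0 X1) (φ X1) ≤ 1 := (keyX (φ X1) hmX hmX).1
  have hbne : bCount (restrict I0 X1) (φ X1) ≠ 0 := by
    intro h0
    unfold share at hgeX
    rw [h0, Nat.cast_zero, zero_div] at hgeX
    norm_num at hgeX
  have hbeq : bCount (restrict I0 X1) (φ X1) = 1 := by omega
  obtain ⟨p, hpX, hpnc⟩ := (keyX (φ X1) hmX hmX).2.2 hbeq
  refine ⟨X1, Finset.univ, Finset.subset_univ X1, fun hsub => ?_⟩
  have hp1 : p ∈ choiceOf φ Finset.univ :=
    by simp only [choiceOf, Finset.mem_filter]; exact ⟨Finset.mem_univ p, hmatched p hpX⟩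
  have hmem := hsub (Finset.mem_inter.2 ⟨hp1, hpX⟩)
  obtain ⟨c, hc⟩ := (by simp only [choiceOf, Finset.mem_filter] at hmem; exact hmem.2 : ∃ c, φ X1 c = some p)
  exact hpnc c hc
end

section
/- If μ* respects the beneficiary-share guarantee approximately on the frontier and β(μ*) ≠ β*, then μ* dominates every matching μ' with β(μ') = β*. -/
variable {P C : Type} [DecidableEq P] [Fintype P] [Fintype C]

set_option linter.unusedSectionVars false

open Classical in
noncomputable def inv2 (μ : C → Option P) (p : P) : Option C :=
  if h : ∃ c, μ c = some p then some h.choose else none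

lemma inv2_some_of {μ : C → Option P} {p : P} {c : C}
    (hinj : ∀ c c' p, μ c = some p → μ c' = some p → c = c')
    (h : μ c = some p) : inv2 μ p = some c := by
  rw [inv2, dif_pos ⟨c, h⟩]
  exact congrArg some (hinj _ _ _ (Exists.choose_spec (⟨c, h⟩ : ∃ c, μ c = some p)) h)

lemma inv2_eq_some {μ : C → Option P} {p : P} {c : C}
    (h : inv2 μ p = some c) : μ c = some p := by
  rw [inv2] at h
  split at h
  · next hex =>
      have := hex.choose_spec
      simp only [Option.some.injEq] at h
      rwa [h] at this
  · simp at h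

noncomputable def nxt (μa μc : C → Option P) (c : C) : Option C :=
  (μa c).bind (fun p => inv2 μc p)

lemma nxt_some_elim {μa μc : C → Option P} {c d : C} (h : nxt μa μc c = some d) :
    ∃ p, μa c = some p ∧ μc d = some p := by
  rw [nxt] at h
  cases hac : μa c with
  | none => rw [hac] at h; simp at h
  | some p => rw [hac] at h; simp only [Option.bind_some] at h
              exact ⟨p, rfl, inv2_eq_some h⟩

lemma nxt_some_intro {μa μc : C → Option P}
    (hcinj : ∀ c c' p, μc c = some p → μc c' = some p → c = c')
    {c d : C} {p : P} (h1 : μa c = some p) (h2 : μc d = some p) :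
    nxt μa μc c = some d := by
  rw [nxt, h1, Option.bind_some]
  exact inv2_some_of hcinj h2

lemma nxt_inj {μa μc : C → Option P}
    (hainj : ∀ c c' p, μa c = some p → μa c' = some p → c = c')
    {c c' d : C} (h1 : nxt μa μc c = some d) (h2 : nxt μa μc c' = some d) : c = c' := by
  obtain ⟨p, hp1, hp2⟩ := nxt_some_elim h1
  obtain ⟨q, hq1, hq2⟩ := nxt_some_elim h2
  rw [hp2] at hq2
  have : q = p := by injection hq2.symm
  subst this
  exact hainj _ _ _ hp1 hq1

lemma prv_iff_nxt {μa μc : C → Option P}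
    (hainj : ∀ c c' p, μa c = some p → μa c' = some p → c = c')
    (hcinj : ∀ c c' p, μc c = some p → μc c' = some p → c = c')
    {c d : C} : nxt μc μa c = some d ↔ nxt μa μc d = some c := by
  constructor
  · intro h; obtain ⟨p, hp1, hp2⟩ := nxt_some_elim h
    exact nxt_some_intro hcinj hp2 hp1
  · intro h; obtain ⟨p, hp1, hp2⟩ := nxt_some_elim h
    exact nxt_some_intro hainj hp2 hp1

noncomputable def nxtIter (μa μc : C → Option P) : ℕ → C → Option C
  | 0, c => some c
  | n+1, c => (nxt μa μc c).bind (nxtIter μa μc n)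

lemma nxtIter_add (μa μc : C → Option P) (m n : ℕ) (c : C) :
    nxtIter μa μc (m + n) c = (nxtIter μa μc m c).bind (nxtIter μa μc n) := by
  induction m generalizing c with
  | zero => simp [nxtIter]
  | succ k ih =>
      have : k + 1 + n = (k + n) + 1 := by omega
      rw [this]
      show (nxt μa μc c).bind (nxtIter μa μc (k + n)) = _
      rw [show nxtIter μa μc (k+1) c = (nxt μa μc c).bind (nxtIter μa μc k) from rfl]
      cases nxt μa μc c with
      | none => simp
      | some m' => simp only [Option.bind_some]; exact ih m'

lemma nxtIter_one (μa μc : C → Option P) (c : C) : nxtIter μa μc 1 c = nxt μa μc c := by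
  show (nxt μa μc c).bind _ = _
  cases nxt μa μc c <;> rfl

lemma nxtIter_succ' (μa μc : C → Option P) (n : ℕ) (c : C) :
    nxtIter μa μc (n + 1) c = (nxtIter μa μc n c).bind (nxt μa μc) := by
  rw [nxtIter_add μa μc n 1 c]
  cases nxtIter μa μc n c with
  | none => rfl
  | some m => simp only [Option.bind_some]; exact nxtIter_one μa μc m

lemma nxtIter_inj {μa μc : C → Option P}
    (hainj : ∀ c c' p, μa c = some p → μa c' = some p → c = c')
    {k : ℕ} {c c' d : C} (h1 : nxtIter μa μc k c = some d) (h2 : nxtIter μa μc k c' = some d) :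
    c = c' := by
  induction k generalizing c c' with
  | zero => simp [nxtIter] at h1 h2; rw [h1, h2]
  | succ n ih =>
      rw [show nxtIter μa μc (n+1) c = (nxt μa μc c).bind (nxtIter μa μc n) from rfl] at h1
      rw [show nxtIter μa μc (n+1) c' = (nxt μa μc c').bind (nxtIter μa μc n) from rfl] at h2
      cases hx : nxt μa μc c with
      | none => rw [hx] at h1; simp at h1
      | some x =>
        cases hy : nxt μa μc c' with
        | none => rw [hy] at h2; simp at h2
        | some y =>
          rw [hx] at h1; rw [hy] at h2
          simp only [Option.bind_some] at h1 h2
          have := ih h1 h2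
          subst this
          exact nxt_inj hainj hx hy

def Rch (μa μc : C → Option P) (c d : C) : Prop :=
  ∃ k, nxtIter μa μc k c = some d ∨ nxtIter μa μc k d = some c

lemma rch_refl (μa μc : C → Option P) (c : C) : Rch μa μc c c := ⟨0, Or.inl rfl⟩

lemma rch_symm {μa μc : C → Option P} {c d : C} (h : Rch μa μc c d) : Rch μa μc d c := by
  obtain ⟨k, h⟩ := h; exact ⟨k, h.symm⟩

lemma iter_cancel {μa μc : C → Option P}
    (hainj : ∀ c c' p, μa c = some p → μa c' = some p → c = c')
    {i j : ℕ} {c d e : C} (hij : i ≤ j)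
    (h1 : nxtIter μa μc i c = some d) (h2 : nxtIter μa μc j e = some d) :
    nxtIter μa μc (j - i) e = some c := by
  have hj : j = (j - i) + i := by omega
  rw [hj, nxtIter_add] at h2
  cases hm : nxtIter μa μc (j - i) e with
  | none => rw [hm] at h2; simp at h2
  | some m =>
      rw [hm] at h2; simp only [Option.bind_some] at h2
      rw [nxtIter_inj hainj h2 h1]

lemma rch_trans {μa μc : C → Option P}
    (hainj : ∀ c c' p, μa c = some p → μa c' = some p → c = c')
    {c d e : C} (h1 : Rch μa μc c d) (h2 : Rch μa μc d e) : Rch μa μc c e := by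
  obtain ⟨i, hi⟩ := h1
  obtain ⟨j, hj⟩ := h2
  rcases hi with hi | hi <;> rcases hj with hj | hj
  · refine ⟨i + j, Or.inl ?_⟩
    rw [nxtIter_add, hi, Option.bind_some]; exact hj
  · rcases le_total i j with hle | hle
    · exact ⟨j - i, Or.inr (iter_cancel hainj hle hi hj)⟩
    · exact ⟨i - j, Or.inl (iter_cancel hainj hle hj hi)⟩
  · rcases le_total i j with hle | hle
    · refine ⟨j - i, Or.inl ?_⟩
      have hj' : j = i + (j - i) := by omega
      rw [hj', nxtIter_add, hi, Option.bind_some] at hj; exact hj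
    · refine ⟨i - j, Or.inr ?_⟩
      have hi' : i = j + (i - j) := by omega
      rw [hi', nxtIter_add, hj, Option.bind_some] at hi; exact hi
  · refine ⟨j + i, Or.inr ?_⟩
    rw [nxtIter_add, hj, Option.bind_some]; exact hi

lemma rch_nxt {μa μc : C → Option P}
    (hainj : ∀ c c' p, μa c = some p → μa c' = some p → c = c')
    {c0 c d : C} (h : Rch μa μc c0 c) (hd : nxt μa μc c = some d) : Rch μa μc c0 d :=
  rch_trans hainj h ⟨1, Or.inl (by rw [nxtIter_one]; exact hd)⟩

lemma rch_prv {μa μc : C → Option P}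
    (hainj : ∀ c c' p, μa c = some p → μa c' = some p → c = c')
    {c0 c d : C} (h : Rch μa μc c0 c) (hd : nxt μa μc d = some c) : Rch μa μc c0 d :=
  rch_trans hainj h ⟨1, Or.inr (by rw [nxtIter_one]; exact hd)⟩

lemma nxt_none_unique {μa μc : C → Option P} {c c' : C}
    (h : Rch μa μc c c') (h1 : nxt μa μc c = none) (h2 : nxt μa μc c' = none) : c = c' := by
  obtain ⟨k, hk⟩ := h
  cases k with
  | zero => rcases hk with hk | hk <;> (simp [nxtIter] at hk) <;> (first | exact hk | exact hk.symm)
  | succ n =>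
      rcases hk with hk | hk
      · rw [show nxtIter μa μc (n+1) c = (nxt μa μc c).bind (nxtIter μa μc n) from rfl, h1] at hk
        simp at hk
      · rw [show nxtIter μa μc (n+1) c' = (nxt μa μc c').bind (nxtIter μa μc n) from rfl, h2] at hk
        simp at hk

lemma prv_none_unique {μa μc : C → Option P}
    (hainj : ∀ c c' p, μa c = some p → μa c' = some p → c = c')
    (hcinj : ∀ c c' p, μc c = some p → μc c' = some p → c = c')
    {c c' : C}
    (h : Rch μa μc c c') (h1 : nxt μc μa c = none) (h2 : nxt μc μa c' = none) : c = c' := by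
  obtain ⟨k, hk⟩ := h
  cases k with
  | zero => rcases hk with hk | hk <;> (simp [nxtIter] at hk) <;> (first | exact hk | exact hk.symm)
  | succ n =>
      rcases hk with hk | hk
      · rw [nxtIter_succ'] at hk
        cases hm : nxtIter μa μc n c with
        | none => rw [hm] at hk; simp at hk
        | some m =>
            rw [hm] at hk; simp only [Option.bind_some] at hk
            have := (prv_iff_nxt hainj hcinj).mpr hk
            rw [h2] at this; simp at this
      · rw [nxtIter_succ'] at hk
        cases hm : nxtIter μa μc n c' with
        | none => rw [hm] at hk; simp at hk
        | some m =>
            rw [hm] at hk; simp only [Option.bind_some] at hk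
            have := (prv_iff_nxt hainj hcinj).mpr hk
            rw [h1] at this; simp at this
-- counting machinery (appended to part1 for testing)
open Classical in
lemma count_aux (f : C → Option C) (g1 : C → Option P) (g2 : C → Option P) (S : Finset C)
    (hf : ∀ c d, f c = some d → (g2 d).isSome)
    (hfinj : ∀ ⦃c c' d⦄, f c = some d → f c' = some d → c = c')
    (hcl : ∀ c ∈ S, ∀ d, f c = some d → d ∈ S)
    (hu : ∀ c ∈ S, ∀ c' ∈ S, f c = none → f c' = none → c = c') :
    (S.filter fun c => (g1 c).isSome).card ≤ (S.filter fun c => (g2 c).isSome).card + 1 := by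
  classical
  have h1 : S.filter (fun c => (g1 c).isSome)
      ⊆ (S.filter fun c => (f c).isSome) ∪ (S.filter fun c => f c = none) := by
    intro c hc
    rw [Finset.mem_filter] at hc
    rw [Finset.mem_union, Finset.mem_filter, Finset.mem_filter]
    cases hfc : f c with
    | none => exact Or.inr ⟨hc.1, rfl⟩
    | some d => exact Or.inl ⟨hc.1, by simp⟩
  have h2 : (S.filter fun c => (f c).isSome).card ≤ (S.filter fun c => (g2 c).isSome).card := by
    apply Finset.card_le_card_of_injOn (fun c => (f c).getD c)
    · intro c hc
      simp only [Finset.coe_filter, Set.mem_setOf_eq] at hc ⊢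
      obtain ⟨d, hd⟩ := Option.isSome_iff_exists.mp hc.2
      rw [hd]
      exact ⟨hcl c hc.1 d hd, hf c d hd⟩
    · intro c hc c' hc' heq
      simp only [Finset.coe_filter, Set.mem_setOf_eq] at hc hc'
      obtain ⟨d, hd⟩ := Option.isSome_iff_exists.mp hc.2
      obtain ⟨d', hd'⟩ := Option.isSome_iff_exists.mp hc'.2
      have heq' : (f c).getD c = (f c').getD c' := heq
      rw [hd, hd'] at heq'
      simp only [Option.getD_some] at heq'
      subst heq'
      exact hfinj hd hd'
  have h3 : (S.filter fun c => f c = none).card ≤ 1 := by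
    rw [Finset.card_le_one]
    intro a ha b hb
    rw [Finset.mem_filter] at ha hb
    exact hu a ha.1 b hb.1 ha.2 hb.2
  calc (S.filter fun c => (g1 c).isSome).card
      ≤ ((S.filter fun c => (f c).isSome) ∪ (S.filter fun c => f c = none)).card :=
        Finset.card_le_card h1
    _ ≤ (S.filter fun c => (f c).isSome).card + (S.filter fun c => f c = none).card :=
        Finset.card_union_le _ _
    _ ≤ (S.filter fun c => (g2 c).isSome).card + 1 := by omega

open Classical in
noncomputable def comp (μa μc : C → Option P) (c0 : C) : Finset C :=
  Finset.univ.filter (fun c => Rch μa μc c0 c)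

lemma mem_comp {μa μc : C → Option P} {c0 c : C} :
    c ∈ comp μa μc c0 ↔ Rch μa μc c0 c := by
  classical
  rw [comp]
  simp only [Finset.mem_filter, Finset.mem_univ, true_and]

def ClosedS (μa μc : C → Option P) (T : Finset C) : Prop :=
  ∀ c ∈ T, ∀ d, (nxt μa μc c = some d → d ∈ T) ∧ (nxt μa μc d = some c → d ∈ T)

lemma comp_closed {μa μc : C → Option P}
    (hainj : ∀ c c' p, μa c = some p → μa c' = some p → c = c')
    (c0 : C) : ClosedS μa μc (comp μa μc c0) := by
  intro c hc d
  rw [mem_comp] at hc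
  exact ⟨fun hd => mem_comp.mpr (rch_nxt hainj hc hd),
         fun hd => mem_comp.mpr (rch_prv hainj hc hd)⟩

lemma comp_count2 {μa μc : C → Option P}
    (hainj : ∀ c c' p, μa c = some p → μa c' = some p → c = c')
    (hcinj : ∀ c c' p, μc c = some p → μc c' = some p → c = c')
    (c0 : C) :
    ((comp μa μc c0).filter fun c => (μc c).isSome).card
      ≤ ((comp μa μc c0).filter fun c => (μa c).isSome).card + 1 := by
  apply count_aux (f := nxt μc μa)
  · intro c d hd
    obtain ⟨p, hp1, hp2⟩ := nxt_some_elim hd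
    rw [hp2]; rfl
  · intro c c' d h1 h2
    rw [prv_iff_nxt hainj hcinj] at h1 h2
    have := h1.symm.trans h2
    injection this
  · intro c hc d hd
    rw [prv_iff_nxt hainj hcinj] at hd
    exact ((comp_closed hainj c0) c hc d).2 hd
  · intro c hc c' hc' h1 h2
    rw [mem_comp] at hc hc'
    exact prv_none_unique hainj hcinj (rch_trans hainj (rch_symm hc) hc') h1 h2

lemma comp_count1 {μa μc : C → Option P}
    (hainj : ∀ c c' p, μa c = some p → μa c' = some p → c = c')
    (c0 : C) :
    ((comp μa μc c0).filter fun c => (μa c).isSome).card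
      ≤ ((comp μa μc c0).filter fun c => (μc c).isSome).card + 1 := by
  apply count_aux (f := nxt μa μc)
  · intro c d hd
    obtain ⟨p, hp1, hp2⟩ := nxt_some_elim hd
    rw [hp2]; rfl
  · intro c c' d h1 h2
    exact nxt_inj hainj h1 h2
  · intro c hc d hd
    exact ((comp_closed hainj c0) c hc d).1 hd
  · intro c hc c' hc' h1 h2
    rw [mem_comp] at hc hc'
    exact nxt_none_unique (rch_trans hainj (rch_symm hc) hc') h1 h2

open Classical in
lemma closed_sdiff {μa μc : C → Option P} {T S : Finset C}
    (hT : ClosedS μa μc T) (hS : ClosedS μa μc S) : ClosedS μa μc (T \ S) := by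
  intro c hc d
  rw [Finset.mem_sdiff] at hc
  constructor
  · intro hd
    rw [Finset.mem_sdiff]
    refine ⟨(hT c hc.1 d).1 hd, fun hdS => hc.2 ?_⟩
    exact (hS d hdS c).2 hd
  · intro hd
    rw [Finset.mem_sdiff]
    refine ⟨(hT c hc.1 d).2 hd, fun hdS => hc.2 ?_⟩
    exact (hS d hdS c).1 hd

open Classical in
lemma filter_split_card (S : Finset C) (p : C → Prop) [DecidablePred p] :
    (Finset.univ.filter p).card = (S.filter p).card + ((S : Finset C)ᶜ.filter p).card := by
  rw [← Finset.card_union_of_disjoint (Finset.disjoint_filter_filter disjoint_compl_right)]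
  congr 1
  rw [← Finset.filter_union, Finset.union_compl]

open Classical in
lemma filter_sdiff_card (T S : Finset C) (hsub : S ⊆ T) (p : C → Prop) [DecidablePred p] :
    (T.filter p).card = (S.filter p).card + ((T \ S).filter p).card := by
  rw [← Finset.card_union_of_disjoint (Finset.disjoint_filter_filter Finset.disjoint_sdiff)]
  congr 1
  rw [← Finset.filter_union, Finset.union_sdiff_of_subset hsub]

lemma closed_iter_fwd {μa μc : C → Option P} {T : Finset C} (hTcl : ClosedS μa μc T) :
    ∀ (k : ℕ) (c0 c : C), c0 ∈ T → nxtIter μa μc k c0 = some c → c ∈ T := by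
  intro k
  induction k with
  | zero => intro c0 c h hk; simp [nxtIter] at hk; rwa [← hk]
  | succ j ih =>
      intro c0 c h hk
      rw [show nxtIter μa μc (j+1) c0 = (nxt μa μc c0).bind (nxtIter μa μc j) from rfl] at hk
      cases hx : nxt μa μc c0 with
      | none => rw [hx] at hk; simp at hk
      | some x =>
          rw [hx] at hk; simp only [Option.bind_some] at hk
          exact ih x c ((hTcl c0 h x).1 hx) hk

lemma closed_iter_bwd {μa μc : C → Option P} {T : Finset C} (hTcl : ClosedS μa μc T) :
    ∀ (k : ℕ) (c c0 : C), c0 ∈ T → nxtIter μa μc k c = some c0 → c ∈ T := by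
  intro k
  induction k with
  | zero => intro c c0 h hk; simp [nxtIter] at hk; rwa [hk]
  | succ j ih =>
      intro c c0 h hk
      rw [show nxtIter μa μc (j+1) c = (nxt μa μc c).bind (nxtIter μa μc j) from rfl] at hk
      cases hx : nxt μa μc c with
      | none => rw [hx] at hk; simp at hk
      | some x =>
          rw [hx] at hk; simp only [Option.bind_some] at hk
          exact (hTcl x (ih x c0 h hk) c).2 hx

open Classical in
lemma find_S {μa μc : C → Option P}
    (hainj : ∀ c c' p, μa c = some p → μa c' = some p → c = c')
    (hcinj : ∀ c c' p, μc c = some p → μc c' = some p → c = c') :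
    ∀ n (T : Finset C), T.card ≤ n → ClosedS μa μc T →
    (T.filter fun c => (μa c).isSome).card < (T.filter fun c => (μc c).isSome).card →
    ∃ S : Finset C, ClosedS μa μc S ∧
      (S.filter fun c => (μc c).isSome).card = (S.filter fun c => (μa c).isSome).card + 1 := by
  intro n
  induction n with
  | zero =>
      intro T hcard _ hlt
      have : T = ∅ := Finset.card_eq_zero.mp (Nat.le_zero.mp hcard)
      subst this
      simp at hlt
  | succ m ih =>
      intro T hcard hTcl hlt
      have hne : ∃ c0, c0 ∈ T := by
        by_contra hno
        push_neg at hno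
        have : T = ∅ := Finset.eq_empty_of_forall_notMem hno
        subst this
        simp at hlt
      obtain ⟨c0, hc0⟩ := hne
      have hS0cl : ClosedS μa μc (comp μa μc c0) := comp_closed hainj c0
      have hS0sub : comp μa μc c0 ⊆ T := by
        intro c hc
        rw [mem_comp] at hc
        obtain ⟨k, hk⟩ := hc
        rcases hk with hk | hk
        · exact closed_iter_fwd hTcl k c0 c hc0 hk
        · exact closed_iter_bwd hTcl k c c0 hc0 hk
      have hbound := comp_count2 hainj hcinj c0
      rcases Nat.lt_or_ge (((comp μa μc c0).filter fun c => (μa c).isSome).card)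
          (((comp μa μc c0).filter fun c => (μc c).isSome).card) with hcase | hcase
      · exact ⟨comp μa μc c0, hS0cl, by omega⟩
      · have hsplit1 := filter_sdiff_card T (comp μa μc c0) hS0sub (fun c => (μa c).isSome)
        have hsplit2 := filter_sdiff_card T (comp μa μc c0) hS0sub (fun c => (μc c).isSome)
        have hc0S0 : c0 ∈ comp μa μc c0 := mem_comp.mpr (rch_refl μa μc c0)
        have hcardlt : (T \ comp μa μc c0).card < T.card :=
          Finset.card_lt_card (Finset.sdiff_ssubset hS0sub ⟨c0, hc0S0⟩)
        exact ih (T \ comp μa μc c0) (by omega) (closed_sdiff hTcl hS0cl) (by omega)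

open Classical in
lemma core_exchange (I : Inst P C) {μa μc : C → Option P}
    (ha : IsMatching I μa) (hc : IsMatching I μc)
    (hlt : eCount μa < eCount μc) :
    ∃ ν1 ν2, IsMatching I ν1 ∧ IsMatching I ν2 ∧
      eCount ν1 = eCount μa + 1 ∧ eCount ν2 + 1 = eCount μc ∧
      bCount I ν1 + bCount I ν2 = bCount I μa + bCount I μc := by
  obtain ⟨hainj, hael⟩ := ha
  obtain ⟨hcinj, hcel⟩ := hc
  have hunivcl : ClosedS μa μc Finset.univ := by
    intro c _ d
    exact ⟨fun _ => Finset.mem_univ d, fun _ => Finset.mem_univ d⟩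
  obtain ⟨S, hScl, hScount⟩ := find_S hainj hcinj (Finset.univ.card) Finset.univ le_rfl hunivcl hlt
  refine ⟨(fun c => if c ∈ S then μc c else μa c), (fun c => if c ∈ S then μa c else μc c),
    ?_, ?_, ?_, ?_, ?_⟩
  · constructor
    · intro c c' p h1 h2
      dsimp only at h1 h2
      by_cases hcS : c ∈ S <;> by_cases hcS' : c' ∈ S
      · rw [if_pos hcS] at h1; rw [if_pos hcS'] at h2
        exact hcinj _ _ _ h1 h2
      · rw [if_pos hcS] at h1; rw [if_neg hcS'] at h2
        exfalso
        have hnx : nxt μa μc c' = some c := nxt_some_intro hcinj h2 h1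
        exact hcS' ((hScl c hcS c').2 hnx)
      · rw [if_neg hcS] at h1; rw [if_pos hcS'] at h2
        exfalso
        have hnx : nxt μa μc c = some c' := nxt_some_intro hcinj h1 h2
        exact hcS ((hScl c' hcS' c).2 hnx)
      · rw [if_neg hcS] at h1; rw [if_neg hcS'] at h2
        exact hainj _ _ _ h1 h2
    · intro c p hp
      dsimp only at hp
      by_cases hcS : c ∈ S
      · rw [if_pos hcS] at hp; exact hcel c p hp
      · rw [if_neg hcS] at hp; exact hael c p hp
  · constructor
    · intro c c' p h1 h2
      dsimp only at h1 h2
      by_cases hcS : c ∈ S <;> by_cases hcS' : c' ∈ S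
      · rw [if_pos hcS] at h1; rw [if_pos hcS'] at h2
        exact hainj _ _ _ h1 h2
      · rw [if_pos hcS] at h1; rw [if_neg hcS'] at h2
        exfalso
        have hnx : nxt μa μc c = some c' := nxt_some_intro hcinj h1 h2
        exact hcS' ((hScl c hcS c').1 hnx)
      · rw [if_neg hcS] at h1; rw [if_pos hcS'] at h2
        exfalso
        have hnx : nxt μa μc c' = some c := nxt_some_intro hcinj h2 h1
        exact hcS ((hScl c' hcS' c).1 hnx)
      · rw [if_neg hcS] at h1; rw [if_neg hcS'] at h2
        exact hcinj _ _ _ h1 h2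
    · intro c p hp
      dsimp only at hp
      by_cases hcS : c ∈ S
      · rw [if_pos hcS] at hp; exact hael c p hp
      · rw [if_neg hcS] at hp; exact hcel c p hp
  · -- eCount ν1 = eCount μa + 1
    have h1 : eCount (fun c => if c ∈ S then μc c else μa c)
        = (S.filter fun c => (μc c).isSome).card + (Sᶜ.filter fun c => (μa c).isSome).card := by
      rw [eCount, filter_split_card S]
      congr 1
      · apply congrArg Finset.card
        apply Finset.filter_congr
        intro c hcS
        rw [if_pos hcS]
      · apply congrArg Finset.card
        apply Finset.filter_congr
        intro c hcS
        rw [Finset.mem_compl] at hcS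
        rw [if_neg hcS]
    have h2 : eCount μa
        = (S.filter fun c => (μa c).isSome).card + (Sᶜ.filter fun c => (μa c).isSome).card := by
      rw [eCount, filter_split_card S]
    omega
  · have h1 : eCount (fun c => if c ∈ S then μa c else μc c)
        = (S.filter fun c => (μa c).isSome).card + (Sᶜ.filter fun c => (μc c).isSome).card := by
      rw [eCount, filter_split_card S]
      congr 1
      · apply congrArg Finset.card
        apply Finset.filter_congr
        intro c hcS
        rw [if_pos hcS]
      · apply congrArg Finset.card
        apply Finset.filter_congr
        intro c hcS
        rw [Finset.mem_compl] at hcS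
        rw [if_neg hcS]
    have h2 : eCount μc
        = (S.filter fun c => (μc c).isSome).card + (Sᶜ.filter fun c => (μc c).isSome).card := by
      rw [eCount, filter_split_card S]
    omega
  · have h1 : bCount I (fun c => if c ∈ S then μc c else μa c)
        = (S.filter fun c => ∃ p ∈ I.B c, μc c = some p).card
          + (Sᶜ.filter fun c => ∃ p ∈ I.B c, μa c = some p).card := by
      rw [bCount, filter_split_card S]
      congr 1
      · apply congrArg Finset.card
        apply Finset.filter_congr
        intro c hcS
        rw [if_pos hcS]
      · apply congrArg Finset.card
        apply Finset.filter_congr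
        intro c hcS
        rw [Finset.mem_compl] at hcS
        rw [if_neg hcS]
    have h2 : bCount I (fun c => if c ∈ S then μa c else μc c)
        = (S.filter fun c => ∃ p ∈ I.B c, μa c = some p).card
          + (Sᶜ.filter fun c => ∃ p ∈ I.B c, μc c = some p).card := by
      rw [bCount, filter_split_card S]
      congr 1
      · apply congrArg Finset.card
        apply Finset.filter_congr
        intro c hcS
        rw [if_pos hcS]
      · apply congrArg Finset.card
        apply Finset.filter_congr
        intro c hcS
        rw [Finset.mem_compl] at hcS
        rw [if_neg hcS]
    have h3 : bCount I μa
        = (S.filter fun c => ∃ p ∈ I.B c, μa c = some p).card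
          + (Sᶜ.filter fun c => ∃ p ∈ I.B c, μa c = some p).card := by
      rw [bCount, filter_split_card S]
    have h4 : bCount I μc
        = (S.filter fun c => ∃ p ∈ I.B c, μc c = some p).card
          + (Sᶜ.filter fun c => ∃ p ∈ I.B c, μc c = some p).card := by
      rw [bCount, filter_split_card S]
    omega

lemma chain_bound (I : Inst P C) {μs : C → Option P} (hs : IsMatching I μs) {M : ℕ}
    (hM : ∀ τ, IsMatching I τ → eCount τ = eCount μs + 1 → bCount I τ ≤ M) :
    ∀ n μ2, IsMatching I μ2 → eCount μ2 = n → eCount μs < n →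
      (bCount I μ2 : ℤ) ≤ (bCount I μs : ℤ)
        + ((n : ℤ) - (eCount μs : ℤ)) * ((M : ℤ) - (bCount I μs : ℤ)) := by
  intro n
  induction n using Nat.strong_induction_on with
  | _ n ih =>
    intro μ2 h2 hn hlt
    rcases eq_or_lt_of_le (Nat.succ_le_of_lt hlt) with heq | hlt2
    · -- n = eCount μs + 1
      have hb := hM μ2 h2 (by omega)
      have : ((n : ℤ) - (eCount μs : ℤ)) = 1 := by omega
      rw [this, one_mul]
      omega
    · obtain ⟨ν1, ν2, hν1, hν2, he1, he2, hbsum⟩ :=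
        core_exchange I hs h2 (by omega)
      have hb1 : bCount I ν1 ≤ M := hM ν1 hν1 he1
      have hb2 := ih (n - 1) (by omega) ν2 hν2 (by omega) (by omega)
      have hcast : ((n - 1 : ℕ) : ℤ) = (n : ℤ) - 1 := by
        have : (1 : ℕ) ≤ n := by omega
        push_cast [this]
        ring
      rw [hcast] at hb2
      have hr : ((n : ℤ) - (eCount μs : ℤ)) * ((M : ℤ) - (bCount I μs : ℤ))
          = ((n : ℤ) - 1 - (eCount μs : ℤ)) * ((M : ℤ) - (bCount I μs : ℤ))
            + ((M : ℤ) - (bCount I μs : ℤ)) := by ring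
      rw [hr]
      omega

lemma exists_greatest {s : Set ℕ} (hne : s.Nonempty) {N : ℕ} (hb : ∀ n ∈ s, n ≤ N) :
    ∃ m, m ∈ s ∧ ∀ n ∈ s, n ≤ m :=
  ⟨sSup s, Nat.sSup_mem hne ⟨N, fun n hn => hb n hn⟩,
    fun n hn => le_csSup ⟨N, fun x hx => hb x hx⟩ hn⟩

lemma bCount_le_eCount (I : Inst P C) (μ : C → Option P) : bCount I μ ≤ eCount μ := by
  apply Finset.card_le_card
  intro c hc
  rw [Finset.mem_filter] at hc ⊢
  obtain ⟨p, _, hp⟩ := hc.2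
  exact ⟨hc.1, by rw [hp]; rfl⟩

lemma eCount_le_card (μ : C → Option P) : eCount μ ≤ Fintype.card C := by
  rw [← Finset.card_univ]
  exact Finset.card_filter_le _ _

lemma bCount_le_card (I : Inst P C) (μ : C → Option P) : bCount I μ ≤ Fintype.card C :=
  le_trans (bCount_le_eCount I μ) (eCount_le_card μ)

lemma isMatching_none (I : Inst P C) : IsMatching I (fun _ => none) :=
  ⟨fun c c' p h _ => by simp at h, fun c p h => by simp at h⟩

lemma exists_MBME (I : Inst P C) : ∃ μ, MaxBeneThenMaxElig I μ := by
  obtain ⟨b1, ⟨μ1, hμ1, hb1⟩, hmax1⟩ :=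
    exists_greatest (s := {b | ∃ μ, IsMatching I μ ∧ bCount I μ = b})
      ⟨bCount I (fun _ => none), (fun _ => none), isMatching_none I, rfl⟩
      (fun n hn => by obtain ⟨μ, _, hμ⟩ := hn; rw [← hμ]; exact bCount_le_card I μ)
  obtain ⟨e1, ⟨μ2, hμ2, hb2, he2⟩, hmax2⟩ :=
    exists_greatest (s := {e | ∃ μ, IsMatching I μ ∧ bCount I μ = b1 ∧ eCount μ = e})
      ⟨eCount μ1, μ1, hμ1, hb1, rfl⟩
      (fun n hn => by obtain ⟨μ, _, _, hμ⟩ := hn; rw [← hμ]; exact eCount_le_card μ)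
  refine ⟨μ2, hμ2, ?_, ?_⟩
  · intro ν hν
    rw [hb2]
    exact hmax1 _ ⟨ν, hν, rfl⟩
  · intro ν hν hbe
    rw [he2]
    exact hmax2 _ ⟨ν, hν, by rw [hbe, hb2], rfl⟩

set_option maxHeartbeats 1000000 in
theorem approx_dominates_exact (I : Inst P C) (β : ℚ) (hβ0 : 0 ≤ β) (hβ1 : β ≤ 1)
    (μStar : C → Option P) (h : ApproxRespects I β μStar)
    (hne : share I μStar ≠ β) :
    ∀ μ', IsMatching I μ' → 0 < eCount μ' → share I μ' = β →
      Dominates I μStar μ' := by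
  intro μ' hm' he' hs'
  obtain ⟨μBE, hBE⟩ := exists_MBME I
  have he'q : (0:ℚ) < (eCount μ' : ℚ) := by exact_mod_cast he'
  have hb'q : (bCount I μ' : ℚ) = β * (eCount μ' : ℚ) := by
    rw [share, div_eq_iff (ne_of_gt he'q)] at hs'
    exact hs'
  rcases le_or_gt (share I μBE) β with hcase | hcase
  · -- μBE has share ≤ β : μStar is a max-bene-then-max-elig matching
    have hMB : MaxBeneThenMaxElig I μStar := h.2 ⟨μBE, hBE, hcase⟩
    have hbeq : bCount I μBE = bCount I μStar :=
      le_antisymm (hMB.2.1 μBE hBE.1) (hBE.2.1 μStar hMB.1)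
    have heeq : eCount μBE = eCount μStar :=
      le_antisymm (hMB.2.2 μBE hBE.1 hbeq) (hBE.2.2 μStar hMB.1 hbeq.symm)
    have hshare_eq : share I μStar = share I μBE := by rw [share, share, hbeq, heeq]
    have hslt : share I μStar < β := lt_of_le_of_ne (hshare_eq ▸ hcase) hne
    have hb'pos : 0 < bCount I μ' := by
      by_contra h0
      push_neg at h0
      have hb0 : bCount I μ' = 0 := by omega
      have hβz : β = 0 := by
        rw [hb0] at hb'q
        simp at hb'q
        rcases hb'q with h1 | h1
        · exact h1
        · exfalso; omega
      have : (0:ℚ) ≤ share I μStar := by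
        rw [share]; positivity
      rw [hβz] at hslt
      linarith
    have hble : bCount I μ' ≤ bCount I μStar := hMB.2.1 μ' hm'
    have hes0 : 0 < eCount μStar := by
      have h1 : bCount I μStar ≤ eCount μStar := bCount_le_eCount I μStar
      omega
    have hesq : (0:ℚ) < (eCount μStar:ℚ) := by exact_mod_cast hes0
    have hbstarq : (bCount I μStar:ℚ) < β * (eCount μStar:ℚ) := by
      rw [share, div_lt_iff₀ hesq] at hslt
      exact hslt
    have hβpos : 0 < β := by
      have h1 : (0:ℚ) < β * (eCount μ' : ℚ) := by
        rw [← hb'q]; exact_mod_cast hb'pos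
      nlinarith
    have hlt : (eCount μ' : ℚ) < (eCount μStar : ℚ) := by
      have hb'le : (bCount I μ' : ℚ) ≤ (bCount I μStar : ℚ) := by exact_mod_cast hble
      have : β * (eCount μ' : ℚ) < β * (eCount μStar : ℚ) := by linarith
      exact (mul_lt_mul_iff_right₀ hβpos).mp this
    have hltn : eCount μ' < eCount μStar := by exact_mod_cast hlt
    exact ⟨le_of_lt hltn, hble, Or.inl hltn⟩
  · -- β < share μBE : μStar is nondominated with minimal share ≥ β
    obtain ⟨hND, hb_le, hmin⟩ := h.1 ⟨μBE, hBE, hcase⟩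
    have hslt : β < share I μStar := lt_of_le_of_ne hb_le (Ne.symm hne)
    have hes0 : 0 < eCount μStar := by
      by_contra h0
      push_neg at h0
      have he0 : eCount μStar = 0 := by omega
      rw [share, he0] at hslt
      simp at hslt
      linarith
    have hesq : (0:ℚ) < (eCount μStar:ℚ) := by exact_mod_cast hes0
    have hbstar : β * (eCount μStar:ℚ) < (bCount I μStar:ℚ) := by
      rw [share, lt_div_iff₀ hesq] at hslt
      exact hslt
    -- main step : eCount μ' ≤ eCount μStar
    have hEle : eCount μ' ≤ eCount μStar := by
      by_contra hgt
      push_neg at hgt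
      obtain ⟨ν1, ν2, hν1, hν2, he1, he2, hbsum⟩ := core_exchange I hND.1 hm' hgt
      obtain ⟨M, ⟨τM, hτM, heτM, hbτM⟩, hMmax⟩ :=
        exists_greatest
          (s := {b | ∃ τ, IsMatching I τ ∧ eCount τ = eCount μStar + 1 ∧ bCount I τ = b})
          ⟨bCount I ν1, ν1, hν1, he1, rfl⟩
          (fun n hn => by obtain ⟨τ, _, _, hb⟩ := hn; rw [← hb]; exact bCount_le_card I τ)
      have hMle : ∀ τ, IsMatching I τ → eCount τ = eCount μStar + 1 → bCount I τ ≤ M :=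
        fun τ h1 h2 => hMmax _ ⟨τ, h1, h2, rfl⟩
      have hMlt : M < bCount I μStar := by
        by_contra hge
        push_neg at hge
        exact hND.2 τM hτM ⟨by omega, by omega, Or.inl (by omega)⟩
      have hcb := chain_bound I hND.1 hMle (eCount μ') μ' hm' rfl hgt
      have hcbq : (bCount I μ' : ℚ) ≤ (bCount I μStar : ℚ)
          + ((eCount μ' : ℚ) - (eCount μStar : ℚ)) * ((M:ℚ) - (bCount I μStar : ℚ)) := by
        exact_mod_cast hcb
      have hK1 : (eCount μStar : ℚ) + 1 ≤ (eCount μ' : ℚ) := by exact_mod_cast hgt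
      have hMq : β * ((eCount μStar : ℚ) + 1) ≤ (M:ℚ) := by
        set K : ℚ := (eCount μ' : ℚ) - (eCount μStar : ℚ) with hKdef
        have hK1' : 1 ≤ K := by rw [hKdef]; linarith
        have h0 : β * (eCount μ' : ℚ)
            ≤ (bCount I μStar:ℚ) + K * ((M:ℚ) - (bCount I μStar:ℚ)) := by
          linarith [hcbq, hb'q]
        have hprod : 0 ≤ (K - 1) * ((bCount I μStar:ℚ) - β * (eCount μStar:ℚ)) :=
          mul_nonneg (by linarith) (by linarith)
        have hident : K * ((M:ℚ) - β*((eCount μStar:ℚ)+1))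
            = (K - 1) * ((bCount I μStar:ℚ) - β * (eCount μStar:ℚ))
              + ((bCount I μStar:ℚ) + K * ((M:ℚ) - (bCount I μStar:ℚ))
                - β * (eCount μ':ℚ)) := by
          rw [hKdef]; ring
        have hkey : 0 ≤ K * ((M:ℚ) - β*((eCount μStar:ℚ)+1)) := by
          rw [hident]; linarith
        have hfin : 0 ≤ (M:ℚ) - β*((eCount μStar:ℚ)+1) := by
          by_contra hneg
          push_neg at hneg
          have : K * ((M:ℚ) - β*((eCount μStar:ℚ)+1)) < 0 :=
            mul_neg_of_pos_of_neg (by linarith) hneg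
          linarith
        linarith
      -- lexicographic (b, e) maximal matching over W
      obtain ⟨Bm, ⟨τ1, hτ1, heτ1, hbτ1m, hbτ1⟩, hBmax⟩ :=
        exists_greatest
          (s := {b | ∃ τ, IsMatching I τ ∧ eCount μStar + 1 ≤ eCount τ ∧ M ≤ bCount I τ ∧
            bCount I τ = b})
          ⟨M, τM, hτM, by omega, by omega, hbτM⟩
          (fun n hn => by obtain ⟨τ, _, _, _, hb⟩ := hn; rw [← hb]; exact bCount_le_card I τ)
      obtain ⟨Em, ⟨ρ, hρ, heρ1, hbρm, hbρ, heρ⟩, hEmax⟩ :=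
        exists_greatest
          (s := {e | ∃ τ, IsMatching I τ ∧ eCount μStar + 1 ≤ eCount τ ∧ M ≤ bCount I τ ∧
            bCount I τ = Bm ∧ eCount τ = e})
          ⟨eCount τ1, τ1, hτ1, heτ1, hbτ1m, hbτ1, rfl⟩
          (fun n hn => by obtain ⟨τ, _, _, _, _, he⟩ := hn; rw [← he]; exact eCount_le_card τ)
      have hρND : NonDominated I ρ := by
        refine ⟨hρ, ?_⟩
        intro σ hσ hdom
        obtain ⟨hde, hdb, hstrict⟩ := hdom
        have hσW : bCount I σ ≤ Bm := hBmax _ ⟨σ, hσ, by omega, by omega, rfl⟩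
        have hbeq2 : bCount I σ = Bm := by omega
        have hσE : eCount σ ≤ Em := hEmax _ ⟨σ, hσ, by omega, by omega, hbeq2, rfl⟩
        omega
      have hbρlt : Bm < bCount I μStar := by
        by_contra hge
        push_neg at hge
        exact hND.2 ρ hρ ⟨by omega, by omega, Or.inl (by omega)⟩
      have hcbρ := chain_bound I hND.1 hMle (eCount ρ) ρ hρ rfl (by omega)
      rw [heρ, hbρ] at hcbρ
      -- deduce Em = e*+1 and Bm = M
      have htle : (Em : ℤ) - (eCount μStar : ℤ) = 1 := by
        set t : ℤ := (Em : ℤ) - (eCount μStar : ℤ) with htdef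
        have h2 : (1:ℤ) ≤ t := by rw [htdef]; omega
        have h3 : (M:ℤ) ≤ (Bm:ℤ) := by omega
        have hbM : (1:ℤ) ≤ (bCount I μStar : ℤ) - M := by omega
        have hid : (1 - t) * ((bCount I μStar : ℤ) - M)
            = ((bCount I μStar : ℤ) - M) + t * ((M:ℤ) - (bCount I μStar : ℤ)) := by ring
        have key : 0 ≤ (1 - t) * ((bCount I μStar : ℤ) - M) := by
          rw [hid]; linarith [hcbρ]
        have ht1 : t ≤ 1 := by
          by_contra hcl
          push_neg at hcl
          have ha : (1 - t) ≤ -1 := by omega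
          have hb2 : (1 - t) * ((bCount I μStar : ℤ) - M) ≤ (1 - t) * 1 :=
            mul_le_mul_of_nonpos_left (by linarith) (by linarith)
          linarith
        omega
      have hBmM : Bm = M := by
        have : (Bm:ℤ) ≤ (bCount I μStar : ℤ)
            + ((Em : ℤ) - (eCount μStar : ℤ)) * ((M:ℤ) - (bCount I μStar : ℤ)) := hcbρ
        rw [htle, one_mul] at this
        omega
      have hEm1 : Em = eCount μStar + 1 := by omega
      -- share ρ = M/(e*+1) is ≥ β and < share μStar : contradiction with minimality
      have hshareρ : share I ρ = (M : ℚ) / ((eCount μStar : ℚ) + 1) := by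
        rw [share, heρ, hbρ, hBmM, hEm1]
        push_cast
        ring_nf
      have hβleρ : β ≤ share I ρ := by
        rw [hshareρ]
        rw [le_div_iff₀ (by positivity)]
        linarith [hMq]
      have hminρ := hmin ρ hρND hβleρ
      have hpos1 : (0:ℚ) < (eCount μStar:ℚ) + 1 := by linarith
      rw [hshareρ, share, div_le_div_iff₀ hesq hpos1] at hminρ
      ring_nf at hminρ
      have hMq2 : (M:ℚ) ≤ (bCount I μStar : ℚ) - 1 := by
        have : (M:ℤ) ≤ (bCount I μStar : ℤ) - 1 := by omega
        exact_mod_cast this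
      have hmul : (M:ℚ) * (eCount μStar:ℚ)
          ≤ ((bCount I μStar : ℚ) - 1) * (eCount μStar:ℚ) :=
        mul_le_mul_of_nonneg_right hMq2 (le_of_lt hesq)
      nlinarith [hminρ, hmul, hesq, hbstar, hβ0, hMq2]
    -- b' ≤ b*
    have hBle : bCount I μ' ≤ bCount I μStar := by
      by_contra hgt
      push_neg at hgt
      have hb'pos : 0 < bCount I μ' := by omega
      have hβpos : 0 < β := by
        have h1 : (0:ℚ) < β * (eCount μ' : ℚ) := by
          rw [← hb'q]; exact_mod_cast hb'pos
        nlinarith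
      have hbb : (bCount I μStar : ℚ) < (bCount I μ' : ℚ) := by exact_mod_cast hgt
      have hee : (eCount μ' : ℚ) ≤ (eCount μStar : ℚ) := by exact_mod_cast hEle
      have h1 : β * (eCount μStar:ℚ) < β * (eCount μ':ℚ) := by linarith
      have h2 : (eCount μStar:ℚ) < (eCount μ':ℚ) := (mul_lt_mul_iff_right₀ hβpos).mp h1
      linarith
    have hstrict : eCount μ' < eCount μStar ∨ bCount I μ' < bCount I μStar := by
      by_contra hno
      push_neg at hno
      have he : eCount μ' = eCount μStar := by omega
      have hb : bCount I μ' = bCount I μStar := by omega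
      apply hne
      rw [← hs', share, share, he, hb]
    exact ⟨hEle, hBle, hstrict⟩
end

section
/- Every matching that respects the beneficiary-share guarantee approximately on the frontier is constrained Pareto optimal: there is no alternative matching μ' with β(μ') ≥ β* such that every patient matched under μ remains matched under μ' and some patient unmatched under μ becomes matched under μ'. -/
set_option linter.unusedSectionVars false
set_option linter.unusedVariables false
set_option linter.unreachableTactic false
set_option linter.unusedTactic false
set_option maxHeartbeats 1000000



variable {P C : Type} [DecidableEq P] [Fintype P] [Fintype C]

def pat (μ : C → Option P) : Finset P := Finset.univ.filter fun p => ∃ c, μ c = some p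

lemma mem_pat {μ : C → Option P} {p : P} : p ∈ pat μ ↔ ∃ c, μ c = some p := by
  simp [pat]

lemma eCount_eq_card_pat {μ : C → Option P}
    (hinj : ∀ c c' p, μ c = some p → μ c' = some p → c = c') :
    eCount μ = (pat μ).card := by
  classical
  refine Finset.card_bij (fun c hc => (μ c).get (by simpa using hc)) ?_ ?_ ?_
  · intro c hc
    rw [mem_pat]
    exact ⟨c, by simp⟩
  · intro c hc c' hc' heq
    have h1 : μ c = some ((μ c).get (by simpa using hc)) := by simp
    have h2 : μ c' = some ((μ c').get (by simpa using hc')) := by simp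
    exact hinj c c' _ h1 (h2.trans (congrArg some heq.symm))
  · intro p hp
    rw [mem_pat] at hp
    obtain ⟨c, hc⟩ := hp
    refine ⟨c, by simp [hc], ?_⟩
    simp [hc]

lemma exists_truncation (I : Inst P C) {μ : C → Option P} (hμ : IsMatching I μ)
    {t : ℕ} (ht : t ≤ eCount μ) :
    ∃ ν, IsMatching I ν ∧ eCount ν = t ∧ min (bCount I μ) t ≤ bCount I ν := by
  classical
  set Bs : Finset C := Finset.univ.filter fun c => ∃ p ∈ I.B c, μ c = some p with hBs
  set Es : Finset C := Finset.univ.filter fun c => (μ c).isSome with hEs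
  have hBsEs : Bs ⊆ Es := by
    intro c hc
    simp only [hBs, hEs, Finset.mem_filter] at hc ⊢
    obtain ⟨_, p, _, hp⟩ := hc
    exact ⟨Finset.mem_univ c, by simp [hp]⟩
  have hbcard : Bs.card = bCount I μ := rfl
  have hecard : Es.card = eCount μ := rfl
  obtain ⟨K1, hK1sub, hK1card⟩ := Finset.exists_subset_card_eq (show min (bCount I μ) t ≤ Bs.card
    from by rw [hbcard]; exact min_le_left _ _)
  have hle2 : t - min (bCount I μ) t ≤ (Es \ Bs).card := by
    rw [Finset.card_sdiff_of_subset hBsEs, hbcard, hecard]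
    omega
  obtain ⟨K2, hK2sub, hK2card⟩ := Finset.exists_subset_card_eq hle2
  set K := K1 ∪ K2 with hK
  have hdisj : Disjoint K1 K2 := by
    refine Finset.disjoint_left.mpr fun c hc1 hc2 => ?_
    exact (Finset.mem_sdiff.mp (hK2sub hc2)).2 (hK1sub hc1)
  have hKcard : K.card = t := by
    rw [hK, Finset.card_union_of_disjoint hdisj, hK1card, hK2card]
    omega
  have hKEs : K ⊆ Es := by
    intro c hc
    rcases Finset.mem_union.mp hc with h | h
    · exact hBsEs (hK1sub h)
    · exact (Finset.mem_sdiff.mp (hK2sub h)).1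
  refine ⟨fun c => if c ∈ K then μ c else none, ⟨?_, ?_⟩, ?_, ?_⟩
  · intro c c' p hc hc'
    by_cases h1 : c ∈ K <;> by_cases h2 : c' ∈ K <;> simp [h1, h2] at hc hc'
    exact hμ.1 c c' p hc hc'
  · intro c p hc
    by_cases h1 : c ∈ K <;> simp [h1] at hc
    exact hμ.2 c p hc
  · have : (Finset.univ.filter fun c => (if c ∈ K then μ c else none).isSome) = K := by
      ext c
      simp only [Finset.mem_filter, Finset.mem_univ, true_and]
      by_cases h1 : c ∈ K
      · simp only [h1, if_true, iff_true]
        have := hKEs h1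
        simpa [hEs] using this
      · simp [h1]
    rw [eCount, this, hKcard]
  · have hsub : K1 ⊆ Finset.univ.filter
        fun c => ∃ p ∈ I.B c, (if c ∈ K then μ c else none) = some p := by
      intro c hc
      have hcB := hK1sub hc
      simp only [hBs, Finset.mem_filter] at hcB
      obtain ⟨_, p, hpB, hp⟩ := hcB
      have hcK : c ∈ K := Finset.mem_union_left _ hc
      simp only [Finset.mem_filter, Finset.mem_univ, true_and]
      exact ⟨p, hpB, by simp [hcK, hp]⟩
    calc min (bCount I μ) t = K1.card := hK1card.symm
    _ ≤ _ := Finset.card_le_card hsub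




noncomputable def invM (μ : C → Option P) (p : P) : Option C :=
  if h : ∃ c, μ c = some p then some h.choose else none

lemma invM_spec {μ : C → Option P} {p : P} {c : C} (h : invM μ p = some c) : μ c = some p := by
  unfold invM at h
  split at h
  · rename_i hex
    cases h
    exact hex.choose_spec
  · cases h

lemma invM_none {μ : C → Option P} {p : P} (h : invM μ p = none) : ¬ ∃ c, μ c = some p := by
  unfold invM at h
  split at h
  · cases h
  · assumption

lemma invM_isSome {μ : C → Option P} {p : P} (h : ∃ c, μ c = some p) :
    ∃ c, invM μ p = some c := by
  unfold invM
  rw [dif_pos h]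
  exact ⟨_, rfl⟩

noncomputable def stepP (M1 M2 : C → Option P) (p : P) : Option P :=
  (invM M2 p).bind M1

lemma stepP_inj {M1 M2 : C → Option P}
    (h1 : ∀ c c' p, M1 c = some p → M1 c' = some p → c = c')
    (h2 : ∀ c c' p, M2 c = some p → M2 c' = some p → c = c')
    {p q r : P} (hp : stepP M1 M2 p = some r) (hq : stepP M1 M2 q = some r) : p = q := by
  unfold stepP at hp hq
  rcases Option.bind_eq_some_iff.mp hp with ⟨c, hc, hc1⟩
  rcases Option.bind_eq_some_iff.mp hq with ⟨c', hc', hc1'⟩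
  have : c = c' := h1 c c' r hc1 hc1'
  subst this
  have e1 := invM_spec hc
  have e2 := invM_spec hc'
  rw [e1] at e2
  exact Option.some_injective _ e2

lemma stepP_mem {M1 M2 : C → Option P} {p r : P} (hp : stepP M1 M2 p = some r) :
    ∃ c, M1 c = some r := by
  rcases Option.bind_eq_some_iff.mp hp with ⟨c, _, hc1⟩
  exact ⟨c, hc1⟩

noncomputable def walkP (M1 M2 : C → Option P) (p : P) : ℕ → Option P
  | 0 => some p
  | n+1 => (walkP M1 M2 p n).bind (stepP M1 M2)

lemma walk_eq_start {M1 M2 : C → Option P} {p0 : P} (hp0 : ¬ ∃ c, M1 c = some p0)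
    {n : ℕ} (h : walkP M1 M2 p0 n = some p0) : n = 0 := by
  cases n with
  | zero => rfl
  | succ m =>
    exfalso
    rcases Option.bind_eq_some_iff.mp h with ⟨q, _, hq⟩
    exact hp0 (stepP_mem hq)

lemma walk_mem_pat1 {M1 M2 : C → Option P} {p0 q : P} {n : ℕ} (hn : n ≠ 0)
    (h : walkP M1 M2 p0 n = some q) : ∃ c, M1 c = some q := by
  cases n with
  | zero => exact absurd rfl hn
  | succ m =>
    rcases Option.bind_eq_some_iff.mp h with ⟨r, _, hr⟩
    exact stepP_mem hr

lemma walk_inj {M1 M2 : C → Option P}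
    (h1 : ∀ c c' p, M1 c = some p → M1 c' = some p → c = c')
    (h2 : ∀ c c' p, M2 c = some p → M2 c' = some p → c = c')
    {p0 : P} (hp0 : ¬ ∃ c, M1 c = some p0) :
    ∀ i j q, walkP M1 M2 p0 i = some q → walkP M1 M2 p0 j = some q → i = j := by
  intro i
  induction i with
  | zero =>
    intro j q hi hj
    simp only [walkP] at hi
    cases hi
    exact (walk_eq_start hp0 hj).symm
  | succ m ih =>
    intro j q hi hj
    cases j with
    | zero =>
      simp only [walkP] at hj
      cases hj
      exact absurd (walk_eq_start hp0 hi) (by omega)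
    | succ k =>
      rcases Option.bind_eq_some_iff.mp hi with ⟨a, ha, ha'⟩
      rcases Option.bind_eq_some_iff.mp hj with ⟨b, hb, hb'⟩
      have hab : a = b := stepP_inj h1 h2 ha' hb'
      subst hab
      have := ih k a ha hb
      omega

lemma walk_disjoint {M1 M2 : C → Option P}
    (h1 : ∀ c c' p, M1 c = some p → M1 c' = some p → c = c')
    (h2 : ∀ c c' p, M2 c = some p → M2 c' = some p → c = c')
    {p0 q0 : P} (hp0 : ¬ ∃ c, M1 c = some p0) (hq0 : ¬ ∃ c, M1 c = some q0)
    (hne : p0 ≠ q0) :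
    ∀ i j r, walkP M1 M2 p0 i = some r → walkP M1 M2 q0 j = some r → False := by
  intro i
  induction i with
  | zero =>
    intro j r hi hj
    simp only [walkP] at hi
    cases hi
    cases j with
    | zero =>
      simp only [walkP] at hj
      cases hj
      exact hne rfl
    | succ k => exact hp0 (walk_mem_pat1 (by omega) hj)
  | succ m ih =>
    intro j r hi hj
    cases j with
    | zero =>
      simp only [walkP] at hj
      cases hj
      exact hq0 (walk_mem_pat1 (by omega) hi)
    | succ k =>
      rcases Option.bind_eq_some_iff.mp hi with ⟨a, ha, ha'⟩
      rcases Option.bind_eq_some_iff.mp hj with ⟨b, hb, hb'⟩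
      have hab : a = b := stepP_inj h1 h2 ha' hb'
      subst hab
      exact ih k a ha hb

lemma walk_terminates {M1 M2 : C → Option P}
    (h1 : ∀ c c' p, M1 c = some p → M1 c' = some p → c = c')
    (h2 : ∀ c c' p, M2 c = some p → M2 c' = some p → c = c')
    {p0 : P} (hp0 : ¬ ∃ c, M1 c = some p0) :
    ∃ n q, walkP M1 M2 p0 n = some q ∧ stepP M1 M2 q = none ∧
      ∀ i, i ≤ n → (walkP M1 M2 p0 i).isSome := by
  classical
  have hterm : ∃ m, walkP M1 M2 p0 m = none := by
    by_contra hcon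
    push_neg at hcon
    have hsome : ∀ m, (walkP M1 M2 p0 m).isSome := fun m =>
      Option.ne_none_iff_isSome.mp (hcon m)
    have hinj : Function.Injective
        (fun m : Fin (Fintype.card P + 1) => (walkP M1 M2 p0 m).get (hsome m)) := by
      intro a b hab
      have ha : walkP M1 M2 p0 a = some ((walkP M1 M2 p0 a).get (hsome a)) := by simp
      have hb : walkP M1 M2 p0 b = some ((walkP M1 M2 p0 b).get (hsome b)) := by simp
      have := walk_inj h1 h2 hp0 a b _ ha (by rw [hb]; exact congrArg some hab.symm)
      exact Fin.ext this
    have := Fintype.card_le_of_injective _ hinj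
    simp at this
  set m0 := Nat.find hterm with hm0
  have hm0spec : walkP M1 M2 p0 m0 = none := Nat.find_spec hterm
  have hm0pos : m0 ≠ 0 := by
    intro h
    rw [h] at hm0spec
    simp [walkP] at hm0spec
  obtain ⟨k, hk⟩ : ∃ k, m0 = k + 1 := ⟨m0 - 1, by omega⟩
  have hksome : ∀ i, i ≤ k → (walkP M1 M2 p0 i).isSome := by
    intro i hi
    have : i < m0 := by omega
    have := Nat.find_min hterm this
    exact Option.ne_none_iff_isSome.mp this
  have hq : (walkP M1 M2 p0 k).isSome := hksome k le_rfl
  refine ⟨k, (walkP M1 M2 p0 k).get hq, by simp, ?_, hksome⟩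
  have : walkP M1 M2 p0 (k+1) = (walkP M1 M2 p0 k).bind (stepP M1 M2) := rfl
  rw [hk] at hm0spec
  rw [this] at hm0spec
  rw [Option.isSome_iff_exists] at hq
  obtain ⟨q, hq'⟩ := hq
  rw [hq'] at hm0spec
  have hget : (walkP M1 M2 p0 k).get hq = q := by simp [hq']
  rw [hget]
  simpa using hm0spec

lemma matching_swap (I : Inst P C) {M1 M2 : C → Option P}
    (h1 : IsMatching I M1) (h2 : IsMatching I M2) (hlt : eCount M1 < eCount M2) :
    ∃ M3 M4, IsMatching I M3 ∧ IsMatching I M4 ∧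
      eCount M3 = eCount M1 + 1 ∧ eCount M4 + 1 = eCount M2 ∧
      bCount I M1 + bCount I M2 = bCount I M3 + bCount I M4 := by
  classical
  obtain ⟨i1, e1⟩ := h1
  obtain ⟨i2, e2⟩ := h2
  have hcard : (pat M1).card < (pat M2).card := by
    rw [← eCount_eq_card_pat i1, ← eCount_eq_card_pat i2]; exact hlt
  -- classification of walks
  have hclass : ∀ p0, p0 ∈ pat M2 → p0 ∉ pat M1 →
      (∃ N q c, walkP M1 M2 p0 N = some q ∧ invM M2 q = some c ∧ M1 c = none ∧
        (∀ i, i ≤ N → (walkP M1 M2 p0 i).isSome)) ∨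
      (∃ n q, n ≠ 0 ∧ walkP M1 M2 p0 n = some q ∧ q ∈ pat M1 ∧ q ∉ pat M2) := by
    intro p0 hp2 hp1
    have hp1' : ¬ ∃ c, M1 c = some p0 := by simpa [mem_pat] using hp1
    obtain ⟨n, q, hw, hstep, hsome⟩ := walk_terminates i1 i2 hp1'
    unfold stepP at hstep
    cases hinv : invM M2 q with
    | none =>
      right
      have hq2 : q ∉ pat M2 := by rw [mem_pat]; exact invM_none hinv
      have hn : n ≠ 0 := by
        intro h
        subst h
        simp only [walkP] at hw
        cases hw
        exact hq2 hp2
      exact ⟨n, q, hn, hw, mem_pat.mpr (walk_mem_pat1 hn hw), hq2⟩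
    | some c =>
      left
      rw [hinv] at hstep
      replace hstep : M1 c = none := by simpa using hstep
      exact ⟨n, q, c, hw, hinv, hstep, hsome⟩
  -- find a good start p0 (case a)
  have hgood : ∃ p0, p0 ∈ pat M2 ∧ p0 ∉ pat M1 ∧
      ∃ N q c, walkP M1 M2 p0 N = some q ∧ invM M2 q = some c ∧ M1 c = none ∧
        (∀ i, i ≤ N → (walkP M1 M2 p0 i).isSome) := by
    by_contra hcon
    push_neg at hcon
    set D2 := pat M2 \ pat M1 with hD2
    set D1 := pat M1 \ pat M2 with hD1
    have hall : ∀ p0, p0 ∈ D2 → ∃ q, q ∈ D1 ∧ ∃ n, n ≠ 0 ∧ walkP M1 M2 p0 n = some q := by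
      intro p0 hp0
      rw [hD2, Finset.mem_sdiff] at hp0
      rcases hclass p0 hp0.1 hp0.2 with hA | hB
      · exfalso
        obtain ⟨N, q, c, h⟩ := hA
        obtain ⟨i, hi, hns⟩ := hcon p0 hp0.1 hp0.2 N q c h.1 h.2.1 h.2.2.1
        exact hns (h.2.2.2 i hi)
      · obtain ⟨n, q, hn, hw, hq1, hq2⟩ := hB
        exact ⟨q, Finset.mem_sdiff.mpr ⟨hq1, hq2⟩, n, hn, hw⟩
    have hall' : ∀ p0 : P, ∃ q, p0 ∈ D2 →
        (q ∈ D1 ∧ ∃ n, n ≠ 0 ∧ walkP M1 M2 p0 n = some q) := by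
      intro p0
      by_cases h : p0 ∈ D2
      · obtain ⟨q, hq⟩ := hall p0 h
        exact ⟨q, fun _ => hq⟩
      · exact ⟨p0, fun h' => absurd h' h⟩
    choose fe hfe using hall'
    have hmaps : ∀ p0 ∈ D2, fe p0 ∈ D1 := fun p0 hp0 => (hfe p0 hp0).1
    have hinjOn : Set.InjOn fe ↑D2 := by
      intro a ha b hb hab
      by_contra hne
      obtain ⟨n, hn, hwa⟩ := (hfe a ha).2
      obtain ⟨m, hm, hwb⟩ := (hfe b hb).2
      rw [hD2, Finset.mem_coe, Finset.mem_sdiff, mem_pat] at ha hb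
      have ha1 : ¬ ∃ c, M1 c = some a := by simpa [mem_pat] using ha.2
      have hb1 : ¬ ∃ c, M1 c = some b := by simpa [mem_pat] using hb.2
      exact walk_disjoint i1 i2 ha1 hb1 hne n m (fe a) hwa (hab ▸ hwb)
    have hle : D2.card ≤ D1.card := Finset.card_le_card_of_injOn fe hmaps hinjOn
    have e1' : D1.card + (pat M1 ∩ pat M2).card = (pat M1).card :=
      Finset.card_sdiff_add_card_inter _ _
    have e2' : D2.card + (pat M2 ∩ pat M1).card = (pat M2).card :=
      Finset.card_sdiff_add_card_inter _ _
    rw [Finset.inter_comm] at e2'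
    omega
  obtain ⟨p0, hp02, hp01, N, qN, cN, hwN, hinvN, hM1cN, hsome⟩ := hgood
  have hp01' : ¬ ∃ c, M1 c = some p0 := by simpa [mem_pat] using hp01
  haveI hCne : Nonempty C := ⟨cN⟩
  -- the patient sequence
  have hpiex : ∀ i, ∃ q, (i ≤ N → walkP M1 M2 p0 i = some q) := by
    intro i
    by_cases h : i ≤ N
    · have hs := hsome i h
      rw [Option.isSome_iff_exists] at hs
      obtain ⟨q, hq⟩ := hs
      exact ⟨q, fun _ => hq⟩
    · exact ⟨p0, fun h' => absurd h' h⟩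
  choose pi hpi using hpiex
  have hpi0 : pi 0 = p0 := by
    have := hpi 0 (Nat.zero_le N)
    simp only [walkP] at this
    exact (Option.some_injective _ this).symm
  have hpistep : ∀ i, i < N → stepP M1 M2 (pi i) = some (pi (i+1)) := by
    intro i hi
    have ha := hpi i (le_of_lt hi)
    have hb := hpi (i+1) hi
    have hc : walkP M1 M2 p0 (i+1) = (walkP M1 M2 p0 i).bind (stepP M1 M2) := rfl
    rw [hb, ha] at hc
    simpa using hc.symm
  have hpiN : pi N = qN := by
    have := hpi N le_rfl
    rw [hwN] at this
    exact (Option.some_injective _ this).symm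
  have hpinj : ∀ i j, i ≤ N → j ≤ N → pi i = pi j → i = j := by
    intro i j hi hj hij
    exact walk_inj i1 i2 hp01' i j (pi i) (hpi i hi) (hij ▸ hpi j hj)
  -- the cell sequence
  have hfex : ∀ i, ∃ c, (i ≤ N → invM M2 (pi i) = some c) := by
    intro i
    by_cases h : i ≤ N
    · rcases eq_or_lt_of_le h with h' | h'
      · subst h'
        exact ⟨cN, fun _ => by rw [hpiN]; exact hinvN⟩
      · have := hpistep i h'
        unfold stepP at this
        rcases Option.bind_eq_some_iff.mp this with ⟨c, hc, _⟩
        exact ⟨c, fun _ => hc⟩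
    · exact ⟨Classical.arbitrary C, fun h' => absurd h' h⟩
  choose f hf using hfex
  have hM2f : ∀ i, i ≤ N → M2 (f i) = some (pi i) := fun i hi => invM_spec (hf i hi)
  have hM1f : ∀ i, i < N → M1 (f i) = some (pi (i+1)) := by
    intro i hi
    have := hpistep i hi
    unfold stepP at this
    rw [hf i (le_of_lt hi)] at this
    simpa using this
  have hfN : f N = cN := by
    have := hf N le_rfl
    rw [hpiN, hinvN] at this
    exact (Option.some_injective _ this).symm
  have hM1fN : M1 (f N) = none := by rw [hfN]; exact hM1cN
  have hfinj : ∀ i j, i ≤ N → j ≤ N → f i = f j → i = j := by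
    intro i j hi hj hij
    apply hpinj i j hi hj
    have ha := hM2f i hi
    rw [hij, hM2f j hj] at ha
    exact (Option.some_injective _ ha).symm
  set S : Finset C := (Finset.range (N+1)).image f with hS
  have memS : ∀ c, c ∈ S ↔ ∃ i, i ≤ N ∧ f i = c := by
    intro c
    simp [hS, Nat.lt_succ_iff]
  have hfmem : ∀ i, i ≤ N → f i ∈ S := fun i hi => (memS (f i)).mpr ⟨i, hi, rfl⟩
  set M3 : C → Option P := fun c => if c ∈ S then M2 c else M1 c with hM3
  set M4 : C → Option P := fun c => if c ∈ S then M1 c else M2 c with hM4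
  -- key collision facts
  have hM1S : ∀ (c' : C) (i : ℕ), i ≤ N → c' ∉ S → M1 c' ≠ some (pi i) := by
    intro c' i hi hc'S hcon
    cases i with
    | zero =>
      rw [hpi0] at hcon
      exact hp01' ⟨c', hcon⟩
    | succ k =>
      have hk : k < N := by omega
      have := hM1f k hk
      have := i1 c' (f k) _ hcon this
      exact hc'S (this ▸ hfmem k (le_of_lt hk))
  have hM2S : ∀ (c' : C) (i : ℕ), i ≤ N → c' ∉ S → M2 c' ≠ some (pi i) := by
    intro c' i hi hc'S hcon
    have := i2 c' (f i) _ hcon (hM2f i hi)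
    exact hc'S (this ▸ hfmem i hi)
  have hm3 : IsMatching I M3 := by
    constructor
    · intro c c' p hc hc'
      rw [hM3] at hc hc'
      by_cases hcS : c ∈ S <;> by_cases hc'S : c' ∈ S <;>
        simp only [hcS, hc'S, if_true, if_false] at hc hc'
      · exact i2 c c' p hc hc'
      · exfalso
        obtain ⟨i, hi, rfl⟩ := (memS c).mp hcS
        have : p = pi i := by
          have := hM2f i hi
          rw [hc] at this
          exact (Option.some_injective _ this)
        subst this
        exact hM1S c' i hi hc'S hc'
      · exfalso
        obtain ⟨i, hi, rfl⟩ := (memS c').mp hc'S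
        have : p = pi i := by
          have := hM2f i hi
          rw [hc'] at this
          exact (Option.some_injective _ this)
        subst this
        exact hM1S c i hi hcS hc
      · exact i1 c c' p hc hc'
    · intro c p hc
      rw [hM3] at hc
      by_cases hcS : c ∈ S <;> simp only [hcS, if_true, if_false] at hc
      · exact e2 c p hc
      · exact e1 c p hc
  have hm4 : IsMatching I M4 := by
    constructor
    · intro c c' p hc hc'
      rw [hM4] at hc hc'
      by_cases hcS : c ∈ S <;> by_cases hc'S : c' ∈ S <;>
        simp only [hcS, hc'S, if_true, if_false] at hc hc'
      · exact i1 c c' p hc hc'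
      · exfalso
        obtain ⟨i, hi, rfl⟩ := (memS c).mp hcS
        rcases eq_or_lt_of_le hi with h' | h'
        · subst h'
          rw [hM1fN] at hc
          cases hc
        · have : p = pi (i+1) := by
            have := hM1f i h'
            rw [hc] at this
            exact (Option.some_injective _ this)
          subst this
          exact hM2S c' (i+1) h' hc'S hc'
      · exfalso
        obtain ⟨i, hi, rfl⟩ := (memS c').mp hc'S
        rcases eq_or_lt_of_le hi with h' | h'
        · subst h'
          rw [hM1fN] at hc'
          cases hc'
        · have : p = pi (i+1) := by
            have := hM1f i h'
            rw [hc'] at this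
            exact (Option.some_injective _ this)
          subst this
          exact hM2S c (i+1) h' hcS hc
      · exact i2 c c' p hc hc'
    · intro c p hc
      rw [hM4] at hc
      by_cases hcS : c ∈ S <;> simp only [hcS, if_true, if_false] at hc
      · exact e1 c p hc
      · exact e2 c p hc
  -- eCount M3
  have hE3 : (Finset.univ.filter fun c => (M3 c).isSome) =
      insert (f N) (Finset.univ.filter fun c => (M1 c).isSome) := by
    ext c
    simp only [Finset.mem_filter, Finset.mem_univ, true_and, Finset.mem_insert]
    rw [hM3]
    by_cases hcS : c ∈ S
    · simp only [hcS, if_true]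
      obtain ⟨i, hi, rfl⟩ := (memS c).mp hcS
      constructor
      · intro _
        rcases eq_or_lt_of_le hi with h' | h'
        · subst h'; left; rfl
        · right; rw [hM1f i h']; rfl
      · intro _
        rw [hM2f i hi]; rfl
    · simp only [hcS, if_false]
      constructor
      · intro h; right; exact h
      · intro h
        rcases h with h | h
        · exact absurd (h ▸ hfmem N le_rfl) hcS
        · exact h
  have hce3 : eCount M3 = eCount M1 + 1 := by
    have hnm : f N ∉ (Finset.univ.filter fun c => (M1 c).isSome) := by
      simp [hM1fN]
    rw [eCount, hE3, Finset.card_insert_of_notMem hnm, eCount]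
  -- eCount M4
  have hE4 : (Finset.univ.filter fun c => (M2 c).isSome) =
      insert (f N) (Finset.univ.filter fun c => (M4 c).isSome) := by
    ext c
    simp only [Finset.mem_filter, Finset.mem_univ, true_and, Finset.mem_insert]
    rw [hM4]
    by_cases hcS : c ∈ S
    · simp only [hcS, if_true]
      obtain ⟨i, hi, rfl⟩ := (memS c).mp hcS
      constructor
      · intro _
        rcases eq_or_lt_of_le hi with h' | h'
        · subst h'; left; rfl
        · right; rw [hM1f i h']; rfl
      · intro _
        rw [hM2f i hi]; rfl
    · simp only [hcS, if_false]
      constructor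
      · intro h; right; exact h
      · intro h
        rcases h with h | h
        · exact absurd (h ▸ hfmem N le_rfl) hcS
        · exact h
  have hce4 : eCount M4 + 1 = eCount M2 := by
    have hnm : f N ∉ (Finset.univ.filter fun c => (M4 c).isSome) := by
      simp only [Finset.mem_filter, Finset.mem_univ, true_and]
      rw [hM4]
      simp [hfmem N le_rfl, hM1fN]
    rw [eCount, eCount, hE4, Finset.card_insert_of_notMem hnm]
  -- bCount
  have hB3 : (Finset.univ.filter fun c => ∃ p ∈ I.B c, M3 c = some p) =
      ((Finset.univ.filter fun c => ∃ p ∈ I.B c, M1 c = some p) \ S) ∪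
      ((Finset.univ.filter fun c => ∃ p ∈ I.B c, M2 c = some p) ∩ S) := by
    ext c
    simp only [Finset.mem_filter, Finset.mem_univ, true_and, Finset.mem_union,
      Finset.mem_sdiff, Finset.mem_inter]
    rw [hM3]
    by_cases hcS : c ∈ S <;> simp [hcS] <;> tauto
  have hB4 : (Finset.univ.filter fun c => ∃ p ∈ I.B c, M4 c = some p) =
      ((Finset.univ.filter fun c => ∃ p ∈ I.B c, M2 c = some p) \ S) ∪
      ((Finset.univ.filter fun c => ∃ p ∈ I.B c, M1 c = some p) ∩ S) := by
    ext c
    simp only [Finset.mem_filter, Finset.mem_univ, true_and, Finset.mem_union,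
      Finset.mem_sdiff, Finset.mem_inter]
    rw [hM4]
    by_cases hcS : c ∈ S <;> simp [hcS] <;> tauto
  have hbsum : bCount I M1 + bCount I M2 = bCount I M3 + bCount I M4 := by
    set A1 := (Finset.univ.filter fun c => ∃ p ∈ I.B c, M1 c = some p) with hA1
    set A2 := (Finset.univ.filter fun c => ∃ p ∈ I.B c, M2 c = some p) with hA2
    have hd1 : Disjoint (A1 \ S) (A2 ∩ S) := by
      refine Finset.disjoint_left.mpr fun c hc1 hc2 => ?_
      exact (Finset.mem_sdiff.mp hc1).2 (Finset.mem_inter.mp hc2).2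
    have hd2 : Disjoint (A2 \ S) (A1 ∩ S) := by
      refine Finset.disjoint_left.mpr fun c hc1 hc2 => ?_
      exact (Finset.mem_sdiff.mp hc1).2 (Finset.mem_inter.mp hc2).2
    have hc3 : bCount I M3 = (A1 \ S).card + (A2 ∩ S).card := by
      rw [bCount, hB3, Finset.card_union_of_disjoint hd1]
    have hc4 : bCount I M4 = (A2 \ S).card + (A1 ∩ S).card := by
      rw [bCount, hB4, Finset.card_union_of_disjoint hd2]
    have hs1 : (A1 \ S).card + (A1 ∩ S).card = A1.card :=
      Finset.card_sdiff_add_card_inter _ _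
    have hs2 : (A2 \ S).card + (A2 ∩ S).card = A2.card :=
      Finset.card_sdiff_add_card_inter _ _
    have hb1 : bCount I M1 = A1.card := rfl
    have hb2 : bCount I M2 = A2.card := rfl
    omega
  exact ⟨M3, M4, hm3, hm4, hce3, hce4, hbsum⟩



lemma exists_max_max {α : Type*} {F : Finset α} (hF : F.Nonempty) (f g : α → ℕ) :
    ∃ a ∈ F, (∀ b ∈ F, f b ≤ f a) ∧ ∀ b ∈ F, f b = f a → g b ≤ g a := by
  classical
  obtain ⟨a1, ha1, hmax⟩ := F.exists_max_image f hF
  have hne : (F.filter fun b => f b = f a1).Nonempty := ⟨a1, by simp [ha1]⟩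
  obtain ⟨a, ha, hmax2⟩ := (F.filter fun b => f b = f a1).exists_max_image g hne
  rw [Finset.mem_filter] at ha
  refine ⟨a, ha.1, fun b hb => ha.2 ▸ hmax b hb, fun b hb hfb => ?_⟩
  exact hmax2 b (Finset.mem_filter.mpr ⟨hb, by rw [hfb, ha.2]⟩)

theorem approx_constrained_pareto (I : Inst P C) (β : ℚ) (hβ0 : 0 ≤ β) (hβ1 : β ≤ 1)
    (μ : C → Option P) (h : ApproxRespects I β μ) :
    ¬ ∃ μ', IsMatching I μ' ∧ β ≤ share I μ' ∧
      (∀ p, (∃ c, μ c = some p) → ∃ c, μ' c = some p) ∧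
      (∃ p, (∀ c, μ c ≠ some p) ∧ ∃ c, μ' c = some p) := by
  classical
  -- a max-bene-then-max-elig matching always exists
  have hmatchne : (Finset.univ.filter fun σ : C → Option P => IsMatching I σ).Nonempty := by
    refine ⟨fun _ => none, ?_⟩
    simp only [Finset.mem_filter, Finset.mem_univ, true_and]
    exact ⟨fun c c' p hc _ => absurd hc (by simp), fun c p hc => absurd hc (by simp)⟩
  obtain ⟨μB, hμBmem, hBbmax, hBemax⟩ := exists_max_max hmatchne (bCount I) eCount
  have hμBmatch : IsMatching I μB := (Finset.mem_filter.mp hμBmem).2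
  have hμBmax : MaxBeneThenMaxElig I μB := by
    refine ⟨hμBmatch, fun ν hν => ?_, fun ν hν h' => ?_⟩
    · exact hBbmax ν (by simp [Finset.mem_filter, hν])
    · exact hBemax ν (by simp [Finset.mem_filter, hν]) h'
  rintro ⟨μ', hm', hβ', hkeep, pstar, hpstar, cstar, hcstar⟩
  by_cases hcase : β < share I μB
  · -- Case 1
    obtain ⟨hnd, hβμ, hmin⟩ := h.1 ⟨μB, hμBmax, hcase⟩
    have hμm : IsMatching I μ := hnd.1
    have hss : pat μ ⊂ pat μ' := by
      constructor
      · intro p hp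
        exact mem_pat.mpr (hkeep p (mem_pat.mp hp))
      · intro hsub
        have h1 : pstar ∈ pat μ' := mem_pat.mpr ⟨cstar, hcstar⟩
        have h2 : pstar ∉ pat μ := by
          rw [mem_pat]
          rintro ⟨c, hc⟩
          exact hpstar c hc
        exact h2 (hsub h1)
    have hlt : eCount μ < eCount μ' := by
      rw [eCount_eq_card_pat hμm.1, eCount_eq_card_pat hm'.1]
      exact Finset.card_lt_card hss
    have he'pos : (0:ℚ) < (eCount μ' : ℚ) := by
      have : 0 < eCount μ' := by omega
      exact_mod_cast this
    have hb'q : β * (eCount μ' : ℚ) ≤ (bCount I μ' : ℚ) := by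
      have hsh := hβ'
      rw [share, le_div_iff₀ he'pos] at hsh
      exact hsh
    -- the set U
    set U := Finset.univ.filter (fun σ : C → Option P => IsMatching I σ ∧
      eCount μ + 1 ≤ eCount σ ∧ β * (eCount σ : ℚ) ≤ (bCount I σ : ℚ)) with hU
    have hμ'U : μ' ∈ U := by
      simp only [hU, Finset.mem_filter, Finset.mem_univ, true_and]
      exact ⟨hm', by omega, hb'q⟩
    obtain ⟨ν, hνmem, hbmaxU, hemaxU⟩ := exists_max_max ⟨μ', hμ'U⟩ (bCount I) eCount
    have hνfacts := (Finset.mem_filter.mp hνmem).2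
    obtain ⟨hνm, hνe, hνq⟩ := hνfacts
    have hb'bν : bCount I μ' ≤ bCount I ν := hbmaxU μ' hμ'U
    have hβe1 : β * ((eCount μ : ℚ) + 1) ≤ (bCount I ν : ℚ) := by
      have s1 : β * ((eCount μ : ℚ) + 1) ≤ β * (eCount μ' : ℚ) := by
        apply mul_le_mul_of_nonneg_left _ hβ0
        have : eCount μ + 1 ≤ eCount μ' := by omega
        exact_mod_cast this
      have s2 : (bCount I μ' : ℚ) ≤ (bCount I ν : ℚ) := by exact_mod_cast hb'bν
      linarith
    have hνnd : NonDominated I ν := by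
      refine ⟨hνm, fun τ hτ hdom => ?_⟩
      obtain ⟨hde, hdb, hstrict⟩ := hdom
      by_cases hτe : eCount τ = eCount μ + 1
      · have hbτ : bCount I ν < bCount I τ := by
          rcases hstrict with hs | hs
          · omega
          · exact hs
        have hτU : τ ∈ U := by
          simp only [hU, Finset.mem_filter, Finset.mem_univ, true_and]
          refine ⟨hτ, by omega, ?_⟩
          rw [hτe]
          push_cast
          have : (bCount I ν : ℚ) ≤ (bCount I τ : ℚ) := by exact_mod_cast hbτ.le
          linarith
        have := hbmaxU τ hτU
        omega
      · have hτe2 : eCount μ + 2 ≤ eCount τ := by omega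
        obtain ⟨M3, M4, hm3, hm4, he3, he4, hbs⟩ :=
          matching_swap I hμm hτ (by omega : eCount μ < eCount τ)
        by_cases hb3 : bCount I μ ≤ bCount I M3
        · exact hnd.2 M3 hm3 ⟨by omega, hb3, Or.inl (by omega)⟩
        · have hb4 : bCount I ν < bCount I M4 := by omega
          set t := max (bCount I M4) (eCount μ + 1) with ht
          have htle : t ≤ eCount M4 :=
            max_le (bCount_le_eCount I M4) (by omega)
          obtain ⟨M5, hm5, he5, hb5⟩ := exists_truncation I hm4 htle
          have hb5' : bCount I M4 ≤ bCount I M5 := by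
            have hmin' : min (bCount I M4) t = bCount I M4 :=
              min_eq_left (le_max_left _ _)
            omega
          have hM5U : M5 ∈ U := by
            simp only [hU, Finset.mem_filter, Finset.mem_univ, true_and]
            refine ⟨hm5, by rw [he5]; exact le_max_right _ _, ?_⟩
            rw [he5]
            have hb45 : (bCount I M4 : ℚ) ≤ (bCount I M5 : ℚ) := by exact_mod_cast hb5'
            rcases max_choice (bCount I M4) (eCount μ + 1) with hmx | hmx
            · rw [ht, hmx]
              have : β * (bCount I M4 : ℚ) ≤ (bCount I M4 : ℚ) := by nlinarith [Nat.cast_nonneg (α := ℚ) (bCount I M4)]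
              linarith
            · rw [ht, hmx]
              push_cast
              have : (bCount I ν : ℚ) ≤ (bCount I M4 : ℚ) := by exact_mod_cast hb4.le
              linarith
          have := hbmaxU M5 hM5U
          omega
    by_cases hbb : bCount I μ ≤ bCount I ν
    · exact hnd.2 ν hνm ⟨by omega, hbb, Or.inl (by omega)⟩
    · push_neg at hbb
      have hb1 : 1 ≤ bCount I μ := by omega
      have he1 : 1 ≤ eCount μ := le_trans hb1 (bCount_le_eCount I μ)
      have hepos : (0:ℚ) < (eCount μ : ℚ) := by exact_mod_cast he1
      have heνpos : (0:ℚ) < (eCount ν : ℚ) := by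
        have : 0 < eCount ν := by omega
        exact_mod_cast this
      have hβν : β ≤ share I ν := by
        rw [share, le_div_iff₀ heνpos]
        exact hνq
      have hms := hmin ν hνnd hβν
      rw [share, share, div_le_div_iff₀ hepos heνpos] at hms
      -- natural-number contradiction
      have hA : (bCount I ν : ℚ) + 1 ≤ (bCount I μ : ℚ) := by exact_mod_cast hbb
      have hB : (eCount μ : ℚ) + 1 ≤ (eCount ν : ℚ) := by exact_mod_cast hνe
      have hC : (0:ℚ) ≤ (bCount I ν : ℚ) := by positivity
      nlinarith
  · -- Case 2
    have hMB : MaxBeneThenMaxElig I μ := h.2 ⟨μB, hμBmax, le_of_not_gt hcase⟩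
    have hμm : IsMatching I μ := hMB.1
    have hss : pat μ ⊂ pat μ' := by
      constructor
      · intro p hp
        exact mem_pat.mpr (hkeep p (mem_pat.mp hp))
      · intro hsub
        have h1 : pstar ∈ pat μ' := mem_pat.mpr ⟨cstar, hcstar⟩
        have h2 : pstar ∉ pat μ := by
          rw [mem_pat]
          rintro ⟨c, hc⟩
          exact hpstar c hc
        exact h2 (hsub h1)
    have hlt : eCount μ < eCount μ' := by
      rw [eCount_eq_card_pat hμm.1, eCount_eq_card_pat hm'.1]
      exact Finset.card_lt_card hss
    have hb' : bCount I μ' ≤ bCount I μ := hMB.2.1 μ' hm'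
    by_cases heq : bCount I μ' = bCount I μ
    · have := hMB.2.2 μ' hm' heq
      omega
    · have hblt : bCount I μ' < bCount I μ := lt_of_le_of_ne hb' heq
      have hbeq : bCount I μB = bCount I μ :=
        le_antisymm (hMB.2.1 μB hμBmatch) (hμBmax.2.1 μ hμm)
      have heeq : eCount μB = eCount μ :=
        le_antisymm (hMB.2.2 μB hμBmatch hbeq) (hμBmax.2.2 μ hμm hbeq.symm)
      have hshμ : share I μ ≤ β := by
        have : share I μB = share I μ := by rw [share, share, hbeq, heeq]
        linarith [le_of_not_gt hcase, this]
      have hb1 : 1 ≤ bCount I μ := by omega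
      have he1 : 1 ≤ eCount μ := le_trans hb1 (bCount_le_eCount I μ)
      have hepos : (0:ℚ) < (eCount μ : ℚ) := by exact_mod_cast he1
      have he'pos : (0:ℚ) < (eCount μ' : ℚ) := by
        have : 0 < eCount μ' := by omega
        exact_mod_cast this
      have h1 : (bCount I μ : ℚ) ≤ β * (eCount μ : ℚ) := by
        rw [share, div_le_iff₀ hepos] at hshμ
        exact hshμ
      have h2 : β * (eCount μ' : ℚ) ≤ (bCount I μ' : ℚ) := by
        rw [share, le_div_iff₀ he'pos] at hβ'
        exact hβ'
      have hchain : (bCount I μ : ℚ) * (eCount μ' : ℚ) ≤ (bCount I μ' : ℚ) * (eCount μ : ℚ) := by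
        have s1 : (bCount I μ : ℚ) * (eCount μ' : ℚ) ≤ (β * (eCount μ : ℚ)) * (eCount μ' : ℚ) :=
          mul_le_mul_of_nonneg_right h1 (by positivity)
        have s2 : (β * (eCount μ' : ℚ)) * (eCount μ : ℚ) ≤ (bCount I μ' : ℚ) * (eCount μ : ℚ) :=
          mul_le_mul_of_nonneg_right h2 (by positivity)
        nlinarith
      have hA : (bCount I μ' : ℚ) + 1 ≤ (bCount I μ : ℚ) := by exact_mod_cast hblt
      have hB : (eCount μ : ℚ) + 1 ≤ (eCount μ' : ℚ) := by exact_mod_cast hlt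
      have hC : (0:ℚ) ≤ (bCount I μ' : ℚ) := by positivity
      nlinarith
end
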